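/- arXiv:2003.08894 — 3 statements merged into one kernel-verified Lean document; each statement's English description precedes it below -/
import Mathlib

section
/- Suppose (Γ, d) is a metric space that is the union of an increasing sequence of subspaces T_1 ⊆ T_2 ⊆ ⋯, each of which (with the restricted metric) is a metric simplicial tree. Then Γ is an ℝ-tree. -/
/-!
An `ℝ`-tree in the sense used here (geodesic, with unique arcs) satisfies the four-point condition
`d(p,q) + d(r,s) ≤ max (d(p,r) + d(q,s)) (d(p,s) + d(q,r))`: the last point `c` of a geodesic
`[x,y]` on a geodesic `[x,z]` is a centre of the triangle `x y z`, because `[y,c]` followed by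
`[c,z]` is an arc and hence has the image of the geodesic `[y,z]`. The four-point condition
involves four points and a geodesic two, so both pass from the trees `T n` to their increasing
union. Conversely, in a geodesic space with the four-point condition an interior point of a
geodesic `[a,b]` separates `a` from `b`, so every arc from `a` to `b` contains `[a,b]`; and an arc
cannot leave `[a,b]` at a point `x`, since the geodesics `[x,a]` and `[x,b]` share an initial
piece that both halves of the arc would have to contain.
-/

open Set Filter Metric

section Common

variable {H : Type*} [MetricSpace H]

/-- `γ` parametrizes a geodesic from `a` to `b` by arclength on `[0, dist a b]`. -/
def IsGeodesicSegment (γ : ℝ → H) (a b : H) : Prop :=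
  γ 0 = a ∧ γ (dist a b) = b ∧
    ∀ s ∈ Set.Icc (0:ℝ) (dist a b), ∀ t ∈ Set.Icc (0:ℝ) (dist a b),
      dist (γ s) (γ t) = |s - t|

/-- A geodesic space: every pair of points is joined by a geodesic. -/
def GeodesicSpace (H : Type*) [MetricSpace H] : Prop :=
  ∀ a b : H, ∃ γ : ℝ → H, IsGeodesicSegment γ a b

/-- The image of a geodesic segment from `a` to `b`. -/
def segImage (γ : ℝ → H) (a b : H) : Set H :=
  γ '' Set.Icc 0 (dist a b)

/-- A space has `Δ`-thin triangles if each side of every geodesic triangle is contained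
in the `Δ`-neighborhood of the union of the other two sides. -/
def ThinTriangles (H : Type*) [MetricSpace H] (Δ : ℝ) : Prop :=
  ∀ a b c : H, ∀ γab γbc γca : ℝ → H,
    IsGeodesicSegment γab a b → IsGeodesicSegment γbc b c → IsGeodesicSegment γca c a →
      ∀ x ∈ segImage γab a b, ∃ y ∈ segImage γbc b c ∪ segImage γca c a, dist x y ≤ Δ

/-- An arc from `a` to `b`, parametrized (injectively and continuously) by `[0,1]`. -/
def IsArcParam (α : ℝ → H) (a b : H) : Prop :=
  ContinuousOn α (Set.Icc 0 1) ∧ Set.InjOn α (Set.Icc 0 1) ∧ α 0 = a ∧ α 1 = b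

/-- An `ℝ`-tree: a metric space in which every pair of points is joined by a geodesic
(so it is a path-metric space and arcs are isometric to intervals of `ℝ`) and in which
the arc joining two points is unique. -/
def IsRTree (X : Type*) [MetricSpace X] : Prop :=
  (∀ a b : X, ∃ γ : ℝ → X, IsGeodesicSegment γ a b) ∧
  ∀ a b : X, ∀ α β : ℝ → X, IsArcParam α a b → IsArcParam β a b →
    α '' Set.Icc 0 1 = β '' Set.Icc 0 1

/-- The translation length of an isometry. -/
noncomputable def translationLength {X : Type*} [MetricSpace X] (τ : X ≃ᵢ X) : ℝ :=
  ⨅ x : X, dist x (τ x)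

/-- The core of an isometry of an `ℝ`-tree: points moved the minimal distance. -/
def isomCore {X : Type*} [MetricSpace X] (τ : X ≃ᵢ X) : Set X :=
  {x : X | dist x (τ x) = translationLength τ}

/-- An elliptic isometry: one having a fixed point. -/
def IsElliptic {X : Type*} [MetricSpace X] (τ : X ≃ᵢ X) : Prop :=
  ∃ x, τ x = x

/-- A hyperbolic isometry of an `ℝ`-tree: positive translation length, with core
isometric to the real line (its axis). -/
def IsHyperbolicIsom {X : Type*} [MetricSpace X] (τ : X ≃ᵢ X) : Prop :=
  0 < translationLength τ ∧
    ∃ e : ℝ → X, (∀ s t : ℝ, dist (e s) (e t) = |s - t|) ∧ Set.range e = isomCore τ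

/-- A metric simplicial tree: an `ℝ`-tree together with a closed discrete set `V` of
vertices such that each connected component of the complement of `V` is an open edge:
it is the interior of a geodesic segment of positive length with endpoints in `V`. -/
def IsMetricSimplicialTree (X : Type*) [MetricSpace X] : Prop :=
  IsRTree X ∧
    ∃ V : Set X, IsClosed V ∧
      (∀ v ∈ V, ∃ ε > 0, ∀ w ∈ V, dist v w < ε → w = v) ∧
      ∀ x ∈ Vᶜ, ∃ L > (0:ℝ), ∃ f : ℝ → X,
        (∀ s ∈ Set.Icc (0:ℝ) L, ∀ t ∈ Set.Icc (0:ℝ) L, dist (f s) (f t) = |s - t|) ∧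
        f '' Set.Ioo 0 L = connectedComponentIn Vᶜ x ∧ f 0 ∈ V ∧ f L ∈ V

end Common

section

variable {X : Type*} [MetricSpace X]

namespace IsGeodesicSegment

variable {γ : ℝ → X} {a b : X} {t : ℝ}

theorem dist_left_eq (h : IsGeodesicSegment γ a b) (ht : t ∈ Icc 0 (dist a b)) :
    dist a (γ t) = t := by
  rw [← h.1, h.2.2 0 ⟨le_rfl, dist_nonneg⟩ t ht, zero_sub, abs_neg, abs_of_nonneg ht.1]

theorem dist_right_eq (h : IsGeodesicSegment γ a b) (ht : t ∈ Icc 0 (dist a b)) :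
    dist (γ t) b = dist a b - t := by
  conv_lhs => rw [← h.2.1]
  rw [h.2.2 t ht _ ⟨dist_nonneg, le_rfl⟩, abs_sub_comm, abs_of_nonneg (sub_nonneg.2 ht.2)]

theorem dist_add_dist_eq (h : IsGeodesicSegment γ a b) (ht : t ∈ Icc 0 (dist a b)) :
    dist a (γ t) + dist (γ t) b = dist a b := by
  rw [h.dist_left_eq ht, h.dist_right_eq ht, add_sub_cancel]

theorem continuousOn (h : IsGeodesicSegment γ a b) : ContinuousOn γ (Icc 0 (dist a b)) :=
  LipschitzOnWith.continuousOn (K := 1) <| .of_dist_le_mul fun s hs t ht => by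
    rw [h.2.2 s hs t ht, NNReal.coe_one, one_mul, Real.dist_eq]

theorem injOn (h : IsGeodesicSegment γ a b) : InjOn γ (Icc 0 (dist a b)) := by
  intro s hs t ht hst
  have := h.2.2 s hs t ht
  rwa [hst, dist_self, eq_comm, abs_eq_zero, sub_eq_zero] at this

theorem exists_isGreatest_mem {K : Set X} (h : IsGeodesicSegment γ a b) (hK : IsClosed K)
    (ha : a ∈ K) : ∃ t₀, IsGreatest {t ∈ Icc 0 (dist a b) | γ t ∈ K} t₀ := by
  have hcpt : IsCompact {t ∈ Icc 0 (dist a b) | γ t ∈ K} :=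
    isCompact_Icc.of_isClosed_subset
      (h.continuousOn.preimage_isClosed_of_isClosed isClosed_Icc hK) fun _ ht => ht.1
  exact hcpt.exists_isGreatest ⟨0, ⟨le_rfl, dist_nonneg⟩, by rwa [h.1]⟩

theorem subtype_val {S : Set X} {γ : ℝ → S} {a b : S} (h : IsGeodesicSegment γ a b) :
    IsGeodesicSegment (fun t => (γ t : X)) a b := by
  refine ⟨congrArg Subtype.val h.1, ?_, fun s hs t ht => ?_⟩
  · simp only [← Subtype.dist_eq, h.2.1]
  · rw [← Subtype.dist_eq] at hs ht ⊢
    exact h.2.2 s hs t ht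

end IsGeodesicSegment

theorem IsArcParam.ne {α : ℝ → X} {a b : X} (h : IsArcParam α a b) : a ≠ b := fun hab =>
  zero_ne_one <|
    h.2.1 ⟨le_rfl, zero_le_one⟩ ⟨zero_le_one, le_rfl⟩ (by rw [h.2.2.1, h.2.2.2, hab])

theorem exists_isArcParam_image_eq {φ : ℝ → X} {l r : ℝ} (hlr : l < r)
    (hc : ContinuousOn φ (Icc l r)) (hi : InjOn φ (Icc l r)) :
    ∃ α : ℝ → X, IsArcParam α (φ l) (φ r) ∧ α '' Icc 0 1 = φ '' Icc l r := by
  have hpos : 0 < r - l := sub_pos.2 hlr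
  have himg : ((r - l) * · + l) '' Icc (0 : ℝ) 1 = Icc l r := by
    rw [image_affine_Icc' hpos]; ring_nf
  have hmaps : MapsTo ((r - l) * · + l) (Icc (0 : ℝ) 1) (Icc l r) := himg ▸ mapsTo_image _ _
  refine ⟨φ ∘ ((r - l) * · + l), ⟨hc.comp (by fun_prop) hmaps, hi.comp ?_ hmaps, ?_, ?_⟩, ?_⟩
  · exact fun s _ t _ hst => mul_left_cancel₀ hpos.ne' (add_right_cancel hst)
  · simp
  · simp
  · rw [image_comp, himg]

theorem IsGeodesicSegment.exists_isArcParam_image_eq {γ : ℝ → X} {a b : X}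
    (h : IsGeodesicSegment γ a b) (hab : a ≠ b) :
    ∃ α : ℝ → X, IsArcParam α a b ∧ α '' Icc 0 1 = segImage γ a b := by
  simpa only [segImage, h.1, h.2.1] using
    _root_.exists_isArcParam_image_eq (dist_pos.2 hab) h.continuousOn h.injOn

section Concatenation

variable {Y : Type*} {f g : ℝ → Y} {l m r : ℝ}

theorem continuousOn_ite_lt [TopologicalSpace Y] (hlm : l ≤ m) (hmr : m ≤ r)
    (hf : ContinuousOn f (Icc l m)) (hg : ContinuousOn g (Icc m r)) (hfg : f m = g m) :
    ContinuousOn (fun u => if u < m then f u else g u) (Icc l r) := by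
  rw [← Icc_union_Icc_eq_Icc hlm hmr]
  refine ContinuousOn.union_of_isClosed ?_ ?_ isClosed_Icc isClosed_Icc
  · refine hf.congr fun u hu => ?_
    rcases hu.2.eq_or_lt with rfl | hum
    · simp [hfg]
    · exact if_pos hum
  · exact hg.congr fun u hu => if_neg (not_lt.2 hu.1)

theorem injOn_ite_lt (hf : InjOn f (Icc l m)) (hg : InjOn g (Icc m r))
    (hfg : ∀ s ∈ Icc l m, ∀ u ∈ Icc m r, f s = g u → s = m) :
    InjOn (fun u => if u < m then f u else g u) (Icc l r) := by
  have hcross : ∀ s ∈ Icc l r, ∀ u ∈ Icc l r, s < m → f s ≠ g u ∨ u < m :=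
    fun s hs u hu hsm => or_iff_not_imp_right.2 fun hum hsu =>
      hsm.ne (hfg s ⟨hs.1, hsm.le⟩ u ⟨not_lt.1 hum, hu.2⟩ hsu)
  intro s hs u hu hsu
  dsimp only at hsu
  by_cases hsm : s < m <;> by_cases hum : u < m <;>
    simp only [hsm, hum, if_true, if_false] at hsu
  · exact hf ⟨hs.1, hsm.le⟩ ⟨hu.1, hum.le⟩ hsu
  · exact absurd hsu ((hcross s hs u hu hsm).resolve_right hum)
  · exact absurd hsu.symm ((hcross u hu s hs hum).resolve_right hsm)
  · exact hg ⟨not_lt.1 hsm, hs.2⟩ ⟨not_lt.1 hum, hu.2⟩ hsu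

end Concatenation

def FourPointCondition (X : Type*) [MetricSpace X] : Prop :=
  ∀ p q r s : X, dist p q + dist r s ≤ max (dist p r + dist q s) (dist p s + dist q r)

namespace IsRTree

theorem exists_center (hX : IsRTree X) {γ : ℝ → X} {x y : X} (hγ : IsGeodesicSegment γ x y)
    (z : X) : ∃ t ∈ Icc 0 (dist x y),
      dist x (γ t) + dist (γ t) z = dist x z ∧ dist y (γ t) + dist (γ t) z = dist y z := by
  obtain ⟨β, hβ⟩ := hX.1 x z
  obtain ⟨t₀, ⟨ht₀, u, hu, hβu⟩, hlast⟩ := hγ.exists_isGreatest_mem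
    (isCompact_Icc.image_of_continuousOn hβ.continuousOn).isClosed
    ⟨0, ⟨le_rfl, dist_nonneg⟩, hβ.1⟩
  obtain rfl : u = t₀ := by rw [← hβ.dist_left_eq hu, hβu, hγ.dist_left_eq ht₀]
  refine ⟨u, ht₀, hβu ▸ hβ.dist_add_dist_eq hu, ?_⟩
  rcases ht₀.2.eq_or_lt with hy | hy
  · rw [hy, hγ.2.1, dist_self, zero_add]
  -- Follow `γ` back from `y` to its last point `γ u = β u` on `β`, then `β` on to `z`:
  -- this is an arc from `y` to `z` through `γ u`.
  set l := 2 * u - dist x y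
  set φ : ℝ → X := fun s => if s < u then γ (2 * u - s) else β s
  have hrefl : MapsTo (2 * u - ·) (Icc l u) (Icc 0 (dist x y)) := fun s hs =>
    ⟨by linarith [hs.2, hu.1], by linarith [hs.1]⟩
  have hlu : l < u := by linarith
  have hφc : ContinuousOn φ (Icc l (dist x z)) :=
    continuousOn_ite_lt hlu.le hu.2 (hγ.continuousOn.comp (by fun_prop) hrefl)
      (hβ.continuousOn.mono (Icc_subset_Icc hu.1 le_rfl)) (by simp [hβu, two_mul])
  have hφi : InjOn φ (Icc l (dist x z)) := by
    refine injOn_ite_lt (hγ.injOn.comp (fun s _ t _ hst => by linarith [hst]) hrefl)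
      (hβ.injOn.mono (Icc_subset_Icc hu.1 le_rfl)) fun s hs v hv hsv => ?_
    have := hlast ⟨hrefl hs, v, ⟨hu.1.trans hv.1, hv.2⟩, hsv.symm⟩
    linarith [hs.2]
  obtain ⟨α, hα, hαφ⟩ := exists_isArcParam_image_eq (hlu.trans_le hu.2) hφc hφi
  have hφl : φ l = y := by simp [φ, hlu, l, hγ.2.1]
  have hφr : φ (dist x z) = z := by simp [φ, hu.2, hβ.2.1]
  rw [hφl, hφr] at hα
  obtain ⟨δ, hδ⟩ := hX.1 y z
  obtain ⟨α', hα', hα'δ⟩ := hδ.exists_isArcParam_image_eq hα.ne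
  have hu_mem : γ u ∈ segImage δ y z := by
    rw [← hα'δ, ← hX.2 y z α α' hα hα', hαφ]
    exact ⟨u, ⟨hlu.le, hu.2⟩, by simp [φ, hβu]⟩
  obtain ⟨s, hs, hδs⟩ := hu_mem
  rw [← hδs]
  exact hδ.dist_add_dist_eq hs

theorem fourPointCondition (hX : IsRTree X) : FourPointCondition X := by
  intro p q r s
  obtain ⟨γ, hγ⟩ := hX.1 p q
  obtain ⟨t₁, ht₁, hpr, hqr⟩ := hX.exists_center hγ r
  obtain ⟨t₂, ht₂, hps, hqs⟩ := hX.exists_center hγ s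
  have hrs := dist_triangle4 r (γ t₁) (γ t₂) s
  rw [dist_comm r (γ t₁), hγ.2.2 t₁ ht₁ t₂ ht₂] at hrs
  rw [hγ.dist_left_eq ht₁] at hpr
  rw [hγ.dist_left_eq ht₂] at hps
  rw [dist_comm q, hγ.dist_right_eq ht₁] at hqr
  rw [dist_comm q, hγ.dist_right_eq ht₂] at hqs
  rcases le_total t₁ t₂ with h | h
  · rw [abs_of_nonpos (sub_nonpos.2 h)] at hrs
    exact le_max_of_le_right (by linarith)
  · rw [abs_of_nonneg (sub_nonneg.2 h)] at hrs
    exact le_max_of_le_left (by linarith)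

end IsRTree

namespace FourPointCondition

variable {a b x : X}

theorem eq_of_dist_left_eq (h4 : FourPointCondition X) {y : X}
    (hx : dist a x + dist x b = dist a b) (hy : dist a y + dist y b = dist a b)
    (hxy : dist a x = dist a y) : x = y := by
  have hmax : max (dist x a + dist y b) (dist x b + dist y a) ≤ dist a b := by
    rw [dist_comm x a, dist_comm y a]
    exact max_le (by linarith) (by linarith)
  exact dist_le_zero.1 (by linarith [h4 x y a b])

theorem mem_segImage (h4 : FourPointCondition X) {γ : ℝ → X} (hγ : IsGeodesicSegment γ a b)
    (hx : dist a x + dist x b = dist a b) : x ∈ segImage γ a b := by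
  have ht : dist a x ∈ Icc 0 (dist a b) :=
    ⟨dist_nonneg, by linarith [dist_nonneg (x := x) (y := b)]⟩
  exact ⟨dist a x, ht, h4.eq_of_dist_left_eq (hγ.dist_add_dist_eq ht) hx (hγ.dist_left_eq ht)⟩

theorem dist_add_dist_eq_of_dist_lt (h4 : FourPointCondition X) {y p : X}
    (hx : dist x p + dist p b = dist x b) (hxy : dist x y < dist x p) :
    dist y p + dist p b = dist y b := by
  rcases le_max_iff.1 (h4 x b y p) with h | h
  · rw [dist_comm b p] at h
    linarith [dist_nonneg (x := y) (y := p)]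
  · rw [dist_comm b y] at h
    linarith [dist_triangle y p b]

theorem mem_of_isPreconnected (h4 : FourPointCondition X) {γ : ℝ → X}
    (hγ : IsGeodesicSegment γ a b) {s : ℝ} (hs : s ∈ Ioo 0 (dist a b)) {K : Set X}
    (hK : IsPreconnected K) (ha : a ∈ K) (hb : b ∈ K) : γ s ∈ K := by
  by_contra hpK
  -- `F`, the set of points `x` with `γ s` between `x` and `b`, is closed, and by the
  -- four-point condition it contains a ball around each of its points other than `γ s`.
  -- As `K` misses `γ s`, it cannot reach from `a ∈ F` to `b ∉ F`.
  have hsIcc : s ∈ Icc 0 (dist a b) := Ioo_subset_Icc_self hs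
  set p := γ s
  set F : Set X := {x | dist x p + dist p b = dist x b}
  have hFc : IsClosed F := isClosed_eq (by fun_prop) (by fun_prop)
  set U := ⋃ x ∈ K ∩ F, ball x (dist x p)
  have hUF : U ⊆ F := iUnion₂_subset fun x hx y hy =>
    h4.dist_add_dist_eq_of_dist_lt hx.2 (by rwa [mem_ball, dist_comm] at hy)
  have hKU : K ⊆ U ∪ Fᶜ := fun x hx => (em (x ∈ F)).imp (fun hxF => mem_iUnion₂.2
    ⟨x, ⟨hx, hxF⟩, mem_ball_self (dist_pos.2 (ne_of_mem_of_not_mem hx hpK))⟩) id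
  have haU : a ∈ U := mem_iUnion₂.2 ⟨a, ⟨ha, hγ.dist_add_dist_eq hsIcc⟩,
    mem_ball_self (by rw [hγ.dist_left_eq hsIcc]; exact hs.1)⟩
  have hKU' : K ⊆ U := hK.subset_left_of_subset_union (isOpen_biUnion fun _ _ => isOpen_ball)
    hFc.isOpen_compl (disjoint_compl_right.mono_left hUF) hKU ⟨a, ha, haU⟩
  have hbF : b ∈ F := hUF (hKU' hb)
  have : dist p b = 0 := by simpa [F, dist_comm b p] using hbF
  rw [hγ.dist_right_eq hsIcc] at this
  linarith [hs.2]

/-- Geodesics from `x` to `a` and to `b` agree up to the Gromov product `(a | b)_x`. -/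
theorem apply_eq_apply_of_two_mul_le (h4 : FourPointCondition X) {γ₁ γ₂ : ℝ → X}
    (h₁ : IsGeodesicSegment γ₁ x a) (h₂ : IsGeodesicSegment γ₂ x b) {s : ℝ} (hs₀ : 0 ≤ s)
    (hs : 2 * s ≤ dist x a + dist x b - dist a b) : γ₁ s = γ₂ s := by
  have hs₁ : s ∈ Icc 0 (dist x a) := ⟨hs₀, by linarith [dist_triangle x a b]⟩
  have hs₂ : s ∈ Icc 0 (dist x b) := ⟨hs₀, by linarith [dist_triangle x b a, dist_comm a b]⟩
  have hxm := h₁.dist_left_eq hs₁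
  have hma := h₁.dist_right_eq hs₁
  have hmb : dist (γ₁ s) b ≤ dist x b - s := by
    have h := h4 (γ₁ s) b x a
    rw [dist_comm (γ₁ s) x, hxm, hma, dist_comm b a, dist_comm b x] at h
    have : max (s + dist a b) (dist x a - s + dist x b) ≤ dist x a + dist x b - s :=
      max_le (by linarith) (by linarith)
    linarith
  refine h4.eq_of_dist_left_eq ?_ (h₂.dist_add_dist_eq hs₂) (by rw [hxm, h₂.dist_left_eq hs₂])
  linarith [dist_triangle x (γ₁ s) b]

theorem dist_add_dist_eq_of_isArcParam (h4 : FourPointCondition X) (hX : GeodesicSpace X)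
    {f : ℝ → X} (hf : IsArcParam f a b) {t : ℝ} (ht : t ∈ Icc 0 1) :
    dist a (f t) + dist (f t) b = dist a b := by
  by_contra hne
  set x := f t
  set e := dist x a + dist x b - dist a b
  have he : 0 < e := by
    have := (dist_triangle a x b).lt_of_ne' hne
    linarith [dist_comm x a]
  have hxa : e ≤ 2 * dist x a := by linarith [dist_triangle x a b]
  have hxb : e ≤ 2 * dist x b := by linarith [dist_triangle x b a, dist_comm a b]
  obtain ⟨γ₁, h₁⟩ := hX x a
  obtain ⟨γ₂, h₂⟩ := hX x b
  -- Both halves of the arc pass through the common point of `[x, a]` and `[x, b]` at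
  -- distance `e / 4` from `x`; injectivity forces it to be `x` itself.
  obtain ⟨t₁, ht₁, hft₁⟩ : γ₁ (e / 4) ∈ f '' Icc 0 t :=
    h4.mem_of_isPreconnected h₁ ⟨by positivity, by linarith⟩
      (isPreconnected_Icc.image f (hf.1.mono (Icc_subset_Icc le_rfl ht.2)))
      ⟨t, ⟨ht.1, le_rfl⟩, rfl⟩ ⟨0, ⟨le_rfl, ht.1⟩, hf.2.2.1⟩
  obtain ⟨t₂, ht₂, hft₂⟩ : γ₂ (e / 4) ∈ f '' Icc t 1 :=
    h4.mem_of_isPreconnected h₂ ⟨by positivity, by linarith⟩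
      (isPreconnected_Icc.image f (hf.1.mono (Icc_subset_Icc ht.1 le_rfl)))
      ⟨t, ⟨le_rfl, ht.2⟩, rfl⟩ ⟨1, ⟨ht.2, le_rfl⟩, hf.2.2.2⟩
  rw [← h4.apply_eq_apply_of_two_mul_le h₁ h₂ (by positivity) (by linarith)] at hft₂
  have ht₁₂ : t₁ = t₂ := hf.2.1 ⟨ht₁.1, ht₁.2.trans ht.2⟩ ⟨ht.1.trans ht₂.1, ht₂.2⟩
    (hft₁.trans hft₂.symm)
  have hxm : dist x (γ₁ (e / 4)) = e / 4 := h₁.dist_left_eq ⟨by positivity, by linarith⟩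
  rw [← hft₁, le_antisymm ht₁.2 (ht₁₂ ▸ ht₂.1), dist_self] at hxm
  linarith

theorem image_eq_segImage_of_isArcParam (h4 : FourPointCondition X) (hX : GeodesicSpace X)
    {f γ : ℝ → X} (hf : IsArcParam f a b) (hγ : IsGeodesicSegment γ a b) :
    f '' Icc 0 1 = segImage γ a b := by
  refine Subset.antisymm ?_ ?_
  · rintro _ ⟨t, ht, rfl⟩
    exact h4.mem_segImage hγ (h4.dist_add_dist_eq_of_isArcParam hX hf ht)
  · rintro _ ⟨s, hs, rfl⟩
    rcases hs.1.eq_or_lt with rfl | h0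
    · exact ⟨0, ⟨le_rfl, zero_le_one⟩, hf.2.2.1.trans hγ.1.symm⟩
    rcases hs.2.eq_or_lt with rfl | h1
    · exact ⟨1, ⟨zero_le_one, le_rfl⟩, hf.2.2.2.trans hγ.2.1.symm⟩
    exact h4.mem_of_isPreconnected hγ ⟨h0, h1⟩ (isPreconnected_Icc.image f hf.1)
      ⟨0, ⟨le_rfl, zero_le_one⟩, hf.2.2.1⟩ ⟨1, ⟨zero_le_one, le_rfl⟩, hf.2.2.2⟩

theorem isRTree (h4 : FourPointCondition X) (hX : GeodesicSpace X) : IsRTree X := by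
  refine ⟨hX, fun a b α β hα hβ => ?_⟩
  obtain ⟨γ, hγ⟩ := hX a b
  rw [h4.image_eq_segImage_of_isArcParam hX hα hγ, h4.image_eq_segImage_of_isArcParam hX hβ hγ]

end FourPointCondition

theorem Directed.exists_finset_subset_of_iUnion_eq_univ {ι α : Type*} {T : ι → Set α}
    (hT : Directed (· ⊆ ·) T) (hunion : ⋃ i, T i = univ) {s : Finset α} (hs : s.Nonempty) :
    ∃ i, (s : Set α) ⊆ T i := by
  obtain ⟨x, -⟩ := hs
  obtain ⟨i, -⟩ := mem_iUnion.1 (hunion ▸ mem_univ x)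
  have : Nonempty ι := ⟨i⟩
  exact hT.exists_mem_subset_of_finset_subset_biUnion (hunion ▸ subset_univ _)

section DirectedUnion

variable {ι : Type*} {T : ι → Set X}

theorem GeodesicSpace.of_directed_iUnion (hT : Directed (· ⊆ ·) T) (hunion : ⋃ i, T i = univ)
    (h : ∀ i, GeodesicSpace (T i)) : GeodesicSpace X := fun a b => by
  classical
  obtain ⟨i, hi⟩ :=
    hT.exists_finset_subset_of_iUnion_eq_univ hunion (Finset.insert_nonempty a {b})
  obtain ⟨γ, hγ⟩ := h i ⟨a, hi (by simp)⟩ ⟨b, hi (by simp)⟩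
  exact ⟨_, hγ.subtype_val⟩

theorem FourPointCondition.of_directed_iUnion (hT : Directed (· ⊆ ·) T)
    (hunion : ⋃ i, T i = univ) (h : ∀ i, FourPointCondition (T i)) : FourPointCondition X :=
  fun p q r s => by
    classical
    obtain ⟨i, hi⟩ :=
      hT.exists_finset_subset_of_iUnion_eq_univ hunion (Finset.insert_nonempty p {q, r, s})
    simpa only [Subtype.dist_eq] using
      h i ⟨p, hi (by simp)⟩ ⟨q, hi (by simp)⟩ ⟨r, hi (by simp)⟩ ⟨s, hi (by simp)⟩

end DirectedUnion

end

/-- A metric space which is the union of an increasing sequence of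
subspaces, each of which is a metric simplicial tree, is an `ℝ`-tree. -/
theorem rtree_of_increasing_union_of_simplicial_trees
    {Γ : Type*} [MetricSpace Γ] (T : ℕ → Set Γ)
    (hmono : Monotone T) (hunion : (⋃ n, T n) = Set.univ)
    (htree : ∀ n, IsMetricSimplicialTree ↥(T n)) :
    IsRTree Γ := by
  have hT : Directed (· ⊆ ·) T := hmono.directed_le
  have h4 : FourPointCondition Γ :=
    .of_directed_iUnion hT hunion fun n => (htree n).1.fourPointCondition
  exact h4.isRTree (.of_directed_iUnion hT hunion fun n => (htree n).1.1)
end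

section
/- Every isometry of an ℝ-tree is either elliptic or hyperbolic. -/
open Set Filter Metric

set_option linter.unusedSectionVars false

section TreeLemmas

variable {X : Type*} [MetricSpace X]

/-- Metric betweenness. -/
private def Btwn (a b c : X) : Prop := dist a b + dist b c = dist a c

private lemma btwn_swap {a b c : X} (h : Btwn a b c) : Btwn c b a := by
  unfold Btwn at *
  rw [dist_comm c b, dist_comm b a, dist_comm c a]; linarith

private lemma btwn_split {a b c d : X} (h1 : Btwn a b c) (h2 : Btwn a c d) :
    Btwn b c d ∧ Btwn a b d := by
  unfold Btwn at *
  have t1 : dist a d ≤ dist a b + dist b d := dist_triangle a b d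
  have t2 : dist b d ≤ dist b c + dist c d := dist_triangle b c d
  constructor <;> linarith

private lemma btwn_merge {a b c d : X} (h1 : Btwn a b d) (h2 : Btwn b c d) :
    Btwn a c d ∧ dist a c = dist a b + dist b c := by
  unfold Btwn at *
  have t1 : dist a d ≤ dist a c + dist c d := dist_triangle a c d
  have t2 : dist a c ≤ dist a b + dist b c := dist_triangle a b c
  constructor <;> linarith

private lemma geo_dist {γ : ℝ → X} {a b : X} (hγ : IsGeodesicSegment γ a b)
    {u v : ℝ} (hu : u ∈ Set.Icc 0 (dist a b)) (hv : v ∈ Set.Icc 0 (dist a b)) :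
    dist (γ u) (γ v) = |u - v| := hγ.2.2 u hu v hv

private lemma geo_cont {γ : ℝ → X} {a b : X} (hγ : IsGeodesicSegment γ a b) :
    ContinuousOn γ (Set.Icc 0 (dist a b)) := by
  have : LipschitzOnWith 1 γ (Set.Icc 0 (dist a b)) := by
    apply LipschitzOnWith.of_dist_le_mul
    intro u hu v hv
    rw [geo_dist hγ hu hv, Real.dist_eq]
    push_cast
    rw [one_mul]
  exact this.continuousOn

private lemma geo_inj {γ : ℝ → X} {a b : X} (hγ : IsGeodesicSegment γ a b) :
    Set.InjOn γ (Set.Icc 0 (dist a b)) := by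
  intro u hu v hv h
  have := geo_dist hγ hu hv
  rw [h, dist_self] at this
  have := abs_eq_zero.mp this.symm
  linarith

private lemma image_scale {f : ℝ → X} {L : ℝ} (hL : 0 < L) :
    (fun r => f (L * r)) '' Set.Icc 0 1 = f '' Set.Icc 0 L := by
  ext z
  constructor
  · rintro ⟨r, hr, rfl⟩
    exact ⟨L * r, ⟨mul_nonneg hL.le hr.1, by nlinarith [hr.1, hr.2]⟩, rfl⟩
  · rintro ⟨u, hu, rfl⟩
    refine ⟨u / L, ⟨div_nonneg hu.1 hL.le, by rw [div_le_one hL]; exact hu.2⟩, ?_⟩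
    show f (L * (u / L)) = f u
    rw [mul_div_cancel₀ _ (ne_of_gt hL)]

private lemma arcparam_of {f : ℝ → X} {L : ℝ} (hL : 0 < L)
    (hc : ContinuousOn f (Set.Icc 0 L)) (hi : Set.InjOn f (Set.Icc 0 L)) :
    IsArcParam (fun r => f (L * r)) (f 0) (f L) := by
  have hmaps : Set.MapsTo (fun r => L * r) (Set.Icc (0:ℝ) 1) (Set.Icc 0 L) := by
    intro r hr
    refine ⟨mul_nonneg hL.le hr.1, ?_⟩
    show L * r ≤ L
    nlinarith [hr.1, hr.2]
  refine ⟨hc.comp (by fun_prop) hmaps, ?_, by simp, by simp⟩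
  intro r hr r' hr' h
  have := hi (hmaps hr) (hmaps hr') h
  have := mul_left_cancel₀ (ne_of_gt hL) this
  exact this

private lemma geo_eval_mem {γ : ℝ → X} {a b : X} (hγ : IsGeodesicSegment γ a b)
    {z : X} (hz : z ∈ γ '' Set.Icc 0 (dist a b)) :
    dist a z ∈ Set.Icc 0 (dist a b) ∧ γ (dist a z) = z ∧
      dist z b = dist a b - dist a z := by
  obtain ⟨u, hu, rfl⟩ := hz
  have h0 : (0:ℝ) ∈ Set.Icc (0:ℝ) (dist a b) := ⟨le_refl _, dist_nonneg⟩
  have hd : dist a (γ u) = u := by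
    have := geo_dist hγ h0 hu
    rw [hγ.1] at this
    rw [this, abs_sub_comm, sub_zero, abs_of_nonneg hu.1]
  have hD : (dist a b) ∈ Set.Icc (0:ℝ) (dist a b) := ⟨dist_nonneg, le_refl _⟩
  have hd2 : dist (γ u) b = dist a b - u := by
    have := geo_dist hγ hu hD
    rw [hγ.2.1] at this
    rw [this, abs_of_nonpos (by linarith [hu.2])]; ring
  rw [hd]
  exact ⟨hu, rfl, hd2⟩

private lemma geodesic_unique (hX : IsRTree X) {γ η : ℝ → X} {a b : X}
    (h1 : IsGeodesicSegment γ a b) (h2 : IsGeodesicSegment η a b) :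
    ∀ u ∈ Set.Icc (0:ℝ) (dist a b), γ u = η u := by
  intro u hu
  rcases eq_or_lt_of_le (dist_nonneg : (0:ℝ) ≤ dist a b) with h | h
  · have : u = 0 := le_antisymm (h ▸ hu.2) hu.1
    rw [this, h1.1, h2.1]
  · have hα := arcparam_of h (geo_cont h1) (geo_inj h1)
    have hβ := arcparam_of h (geo_cont h2) (geo_inj h2)
    rw [h1.1, h1.2.1] at hα
    rw [h2.1, h2.2.1] at hβ
    have himg := hX.2 a b _ _ hα hβ
    rw [image_scale h, image_scale h] at himg
    have hmem : γ u ∈ η '' Set.Icc 0 (dist a b) := himg ▸ ⟨u, hu, rfl⟩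
    obtain ⟨-, heval, -⟩ := geo_eval_mem h2 hmem
    have hdist : dist a (γ u) = u := by
      have := geo_dist h1 ⟨le_refl _, dist_nonneg⟩ hu
      rw [h1.1] at this
      rw [this, abs_sub_comm, sub_zero, abs_of_nonneg hu.1]
    rw [hdist] at heval
    exact heval.symm

-- distance from the start point of a geodesic
private lemma geo_dist_start {γ : ℝ → X} {a b : X} (hγ : IsGeodesicSegment γ a b)
    {u : ℝ} (hu : u ∈ Set.Icc 0 (dist a b)) : dist a (γ u) = u := by
  have := geo_dist hγ ⟨le_rfl, dist_nonneg⟩ hu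
  rw [hγ.1] at this
  rw [this, abs_sub_comm, sub_zero, abs_of_nonneg hu.1]

private lemma geo_dist_end {γ : ℝ → X} {a b : X} (hγ : IsGeodesicSegment γ a b)
    {u : ℝ} (hu : u ∈ Set.Icc 0 (dist a b)) : dist (γ u) b = dist a b - u := by
  have := geo_dist hγ hu ⟨dist_nonneg, le_rfl⟩
  rw [hγ.2.1] at this
  rw [this, abs_of_nonpos (by linarith [hu.2])]; ring

private lemma concat (hX : IsRTree X) {γ1 γ2 ε : ℝ → X} {b m c : X}
    (h1 : IsGeodesicSegment γ1 b m) (h2 : IsGeodesicSegment γ2 m c)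
    (hcross : ∀ s ∈ Set.Icc (0:ℝ) (dist b m), ∀ t ∈ Set.Icc (0:ℝ) (dist m c),
      γ1 s = γ2 t → s = dist b m ∧ t = 0)
    (hε : IsGeodesicSegment ε b c) :
    ε (dist b m) = m ∧ Btwn b m c := by
  rcases eq_or_lt_of_le (dist_nonneg : (0:ℝ) ≤ dist b m) with hL10 | hL1pos
  · have hmb : b = m := dist_eq_zero.mp hL10.symm
    refine ⟨by rw [← hL10, hε.1, hmb], ?_⟩
    show dist b m + dist m c = dist b c
    rw [← hL10, ← hmb, zero_add]
  rcases eq_or_lt_of_le (dist_nonneg : (0:ℝ) ≤ dist m c) with hL20 | hL2pos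
  · have hmc : m = c := dist_eq_zero.mp hL20.symm
    refine ⟨by rw [hmc]; exact hε.2.1, ?_⟩
    show dist b m + dist m c = dist b c
    rw [← hL20, add_zero, hmc]
  -- main case
  have hfd : ∀ r : ℝ, ¬ r ≤ dist b m →
      (fun r => if r ≤ dist b m then γ1 r else γ2 (r - dist b m)) r = γ2 (r - dist b m) :=
    fun r hr => if_neg hr
  set f : ℝ → X := fun r => if r ≤ dist b m then γ1 r else γ2 (r - dist b m) with hf
  have hfval1 : ∀ r, r ≤ dist b m → f r = γ1 r := fun r hr => if_pos hr
  have hfval2 : ∀ r, dist b m < r → f r = γ2 (r - dist b m) :=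
    fun r hr => if_neg (not_le.mpr hr)
  have hf0 : f 0 = b := by rw [hfval1 0 (le_of_lt hL1pos), h1.1]
  have hfL : f (dist b m + dist m c) = c := by
    rw [hfval2 _ (by linarith), add_sub_cancel_left, h2.2.1]
  have hfm : f (dist b m) = m := by rw [hfval1 _ le_rfl, h1.2.1]
  have hmem2 : ∀ r : ℝ, dist b m ≤ r → r ≤ dist b m + dist m c →
      r - dist b m ∈ Set.Icc (0:ℝ) (dist m c) := by
    intro r h h'; exact ⟨by linarith, by linarith⟩
  have hinj : Set.InjOn f (Set.Icc 0 (dist b m + dist m c)) := by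
    intro r hr r' hr' heq
    rcases le_or_gt r (dist b m) with h | h <;> rcases le_or_gt r' (dist b m) with h' | h'
    · rw [hfval1 r h, hfval1 r' h'] at heq
      exact geo_inj h1 ⟨hr.1, h⟩ ⟨hr'.1, h'⟩ heq
    · rw [hfval1 r h, hfval2 r' h'] at heq
      obtain ⟨-, ht⟩ := hcross r ⟨hr.1, h⟩ (r' - dist b m) (hmem2 r' h'.le hr'.2) heq
      linarith
    · rw [hfval2 r h, hfval1 r' h'] at heq
      obtain ⟨-, ht⟩ := hcross r' ⟨hr'.1, h'⟩ (r - dist b m) (hmem2 r h.le hr.2) heq.symm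
      linarith
    · rw [hfval2 r h, hfval2 r' h'] at heq
      have := geo_inj h2 (hmem2 r h.le hr.2) (hmem2 r' h'.le hr'.2) heq
      linarith
  have hlip : ∀ r ∈ Set.Icc (0:ℝ) (dist b m + dist m c),
      ∀ r' ∈ Set.Icc (0:ℝ) (dist b m + dist m c),
      dist (f r) (f r') ≤ |r - r'| := by
    have key : ∀ r ∈ Set.Icc (0:ℝ) (dist b m + dist m c),
        ∀ r' ∈ Set.Icc (0:ℝ) (dist b m + dist m c),
        r ≤ r' → dist (f r) (f r') ≤ |r - r'| := by
      intro r hr r' hr' hle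
      rcases le_or_gt r (dist b m) with h | h <;> rcases le_or_gt r' (dist b m) with h' | h'
      · rw [hfval1 r h, hfval1 r' h', geo_dist h1 ⟨hr.1, h⟩ ⟨hr'.1, h'⟩]
      · rw [hfval1 r h, hfval2 r' h']
        have d1 : dist (γ1 r) m = dist b m - r := geo_dist_end h1 ⟨hr.1, h⟩
        have d2 : dist m (γ2 (r' - dist b m)) = r' - dist b m :=
          geo_dist_start h2 (hmem2 r' h'.le hr'.2)
        calc dist (γ1 r) (γ2 (r' - dist b m))
            ≤ dist (γ1 r) m + dist m (γ2 (r' - dist b m)) := dist_triangle _ _ _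
          _ = dist b m - r + (r' - dist b m) := by rw [d1, d2]
          _ ≤ |r - r'| := by rw [abs_sub_comm, abs_of_nonneg (by linarith)]; linarith
      · linarith
      · rw [hfval2 r h, hfval2 r' h',
          geo_dist h2 (hmem2 r h.le hr.2) (hmem2 r' h'.le hr'.2)]
        rw [show r - dist b m - (r' - dist b m) = r - r' by ring]
    intro r hr r' hr'
    rcases le_total r r' with h | h
    · exact key r hr r' hr' h
    · rw [dist_comm, abs_sub_comm]; exact key r' hr' r hr h
  have hcont : ContinuousOn f (Set.Icc 0 (dist b m + dist m c)) := by
    have : LipschitzOnWith 1 f (Set.Icc 0 (dist b m + dist m c)) := by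
      apply LipschitzOnWith.of_dist_le_mul
      intro u hu v hv
      have := hlip u hu v hv
      rw [Real.dist_eq]
      push_cast
      rw [one_mul]
      exact this
    exact this.continuousOn
  have hLpos : (0:ℝ) < dist b m + dist m c := by linarith
  have hbc : b ≠ c := by
    intro hbceq
    have h1' : (0:ℝ) ∈ Set.Icc (0:ℝ) (dist b m + dist m c) := ⟨le_rfl, hLpos.le⟩
    have h2' : (dist b m + dist m c) ∈ Set.Icc (0:ℝ) (dist b m + dist m c) :=
      ⟨hLpos.le, le_rfl⟩
    have : (0:ℝ) = dist b m + dist m c := hinj h1' h2' (by rw [hf0, hfL, hbceq])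
    linarith
  have hdbc : (0:ℝ) < dist b c := dist_pos.mpr hbc
  have hα := arcparam_of hLpos hcont hinj
  rw [hf0, hfL] at hα
  have hβ := arcparam_of hdbc (geo_cont hε) (geo_inj hε)
  rw [hε.1, hε.2.1] at hβ
  have himg := hX.2 b c _ _ hα hβ
  rw [image_scale hLpos, image_scale hdbc] at himg
  have hmmem : m ∈ ε '' Set.Icc 0 (dist b c) := by
    rw [← himg]
    exact ⟨dist b m, ⟨hL1pos.le, by linarith⟩, hfm⟩
  obtain ⟨u, hu, hueq⟩ := hmmem
  have hdu : dist b m = u := by rw [← hueq, geo_dist_start hε hu]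
  refine ⟨by rw [hdu, hueq], ?_⟩
  show dist b m + dist m c = dist b c
  have := geo_dist_end hε hu
  rw [hueq] at this
  rw [hdu, this]; ring

private lemma btwn_eval (hX : IsRTree X) {a z b : X} {γ : ℝ → X}
    (h : Btwn a z b) (hγ : IsGeodesicSegment γ a b) : γ (dist a z) = z := by
  obtain ⟨γ1, hγ1⟩ := hX.1 a z
  obtain ⟨γ2, hγ2⟩ := hX.1 z b
  have hcross : ∀ s ∈ Set.Icc (0:ℝ) (dist a z), ∀ t ∈ Set.Icc (0:ℝ) (dist z b),
      γ1 s = γ2 t → s = dist a z ∧ t = 0 := by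
    intro s hs t ht heq
    have hd1 : dist a (γ2 t) = s := by rw [← heq]; exact geo_dist_start hγ1 hs
    have hd2 : dist (γ2 t) z = dist a z - s := by rw [← heq]; exact geo_dist_end hγ1 hs
    have hd3 : dist z (γ2 t) = t := geo_dist_start hγ2 ht
    have hd4 : dist (γ2 t) b = dist z b - t := geo_dist_end hγ2 ht
    have htri : dist a b ≤ dist a (γ2 t) + dist (γ2 t) b := dist_triangle _ _ _
    rw [hd1, hd4] at htri
    have hB : dist a z + dist z b = dist a b := h
    have hts : t = dist a z - s := by rw [← hd3, dist_comm, hd2]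
    constructor <;> linarith [hs.2, ht.1]
  exact (concat hX hγ1 hγ2 hcross hγ).1

private lemma median (hX : IsRTree X) (a b c : X) :
    ∃ w : X, Btwn a w b ∧ Btwn a w c ∧ Btwn b w c := by
  obtain ⟨γ, hγ⟩ := hX.1 a b
  obtain ⟨δ, hδ⟩ := hX.1 a c
  have hab0 : (0:ℝ) ≤ dist a b := dist_nonneg
  have hac0 : (0:ℝ) ≤ dist a c := dist_nonneg
  set S : Set ℝ := {u | u ∈ Set.Icc (0:ℝ) (min (dist a b) (dist a c)) ∧ γ u = δ u} with hS
  have hne : (0:ℝ) ∈ S := ⟨⟨le_rfl, le_min hab0 hac0⟩, by rw [hγ.1, hδ.1]⟩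
  have hbdd : BddAbove S := ⟨min (dist a b) (dist a c), fun u hu => hu.1.2⟩
  have hs0 : 0 ≤ sSup S := le_csSup hbdd hne
  have hsmin : sSup S ≤ min (dist a b) (dist a c) := csSup_le ⟨0, hne⟩ fun u hu => hu.1.2
  set s := sSup S with hsdef
  have hsab : s ≤ dist a b := hsmin.trans (min_le_left _ _)
  have hsac : s ≤ dist a c := hsmin.trans (min_le_right _ _)
  have hsIab : s ∈ Set.Icc (0:ℝ) (dist a b) := ⟨hs0, hsab⟩
  have hsIac : s ∈ Set.Icc (0:ℝ) (dist a c) := ⟨hs0, hsac⟩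
  have hdown : ∀ u ∈ Set.Icc (0:ℝ) (dist a b), ∀ v ∈ Set.Icc (0:ℝ) (dist a c),
      γ u = δ v → u ≤ s := by
    intro u hu v hv heq
    have hdu : dist a (γ u) = u := geo_dist_start hγ hu
    have hdv : dist a (δ v) = v := geo_dist_start hδ hv
    have huv : u = v := by rw [← hdu, heq, hdv]
    have : u ∈ S := ⟨⟨hu.1, le_min hu.2 (huv ▸ hv.2)⟩, by rw [heq, huv]⟩
    exact le_csSup hbdd this
  have hagree : γ s = δ s := by
    by_contra hne'
    have hpos : 0 < dist (γ s) (δ s) := dist_pos.mpr hne'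
    obtain ⟨u, huS, hu⟩ := exists_lt_of_lt_csSup ⟨0, hne⟩
      (show s - dist (γ s) (δ s) / 4 < s by linarith)
    have huab : u ∈ Set.Icc (0:ℝ) (dist a b) := ⟨huS.1.1, huS.1.2.trans (min_le_left _ _)⟩
    have huac : u ∈ Set.Icc (0:ℝ) (dist a c) := ⟨huS.1.1, huS.1.2.trans (min_le_right _ _)⟩
    have hus : u ≤ s := le_csSup hbdd huS
    have d1 : dist (γ s) (γ u) = s - u := by
      rw [geo_dist hγ hsIab huab, abs_of_nonneg (by linarith)]
    have d2 : dist (δ u) (δ s) = s - u := by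
      rw [geo_dist hδ huac hsIac, abs_of_nonpos (by linarith)]; ring
    have : dist (γ s) (δ s) ≤ dist (γ s) (γ u) + dist (δ u) (δ s) := by
      calc dist (γ s) (δ s) ≤ dist (γ s) (γ u) + dist (γ u) (δ s) := dist_triangle _ _ _
        _ = dist (γ s) (γ u) + dist (δ u) (δ s) := by rw [huS.2]
    rw [d1, d2] at this
    linarith
  have hdbm : dist b (γ s) = dist a b - s := by
    rw [dist_comm]; exact geo_dist_end hγ hsIab
  have hdmc : dist (γ s) c = dist a c - s := by
    rw [hagree]; exact geo_dist_end hδ hsIac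
  have hγ1 : IsGeodesicSegment (fun r => γ (dist a b - r)) b (γ s) := by
    refine ⟨?_, ?_, ?_⟩
    · show γ (dist a b - 0) = b
      rw [sub_zero, hγ.2.1]
    · show γ (dist a b - dist b (γ s)) = γ s
      rw [hdbm, show dist a b - (dist a b - s) = s by ring]
    · rw [hdbm]
      intro u hu v hv
      have hu' : dist a b - u ∈ Set.Icc (0:ℝ) (dist a b) :=
        ⟨by linarith [hu.2], by linarith [hu.1]⟩
      have hv' : dist a b - v ∈ Set.Icc (0:ℝ) (dist a b) :=
        ⟨by linarith [hv.2], by linarith [hv.1]⟩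
      show dist (γ (dist a b - u)) (γ (dist a b - v)) = |u - v|
      rw [geo_dist hγ hu' hv',
        show dist a b - u - (dist a b - v) = -(u - v) by ring, abs_neg]
  have hγ2 : IsGeodesicSegment (fun r => δ (s + r)) (γ s) c := by
    refine ⟨?_, ?_, ?_⟩
    · show δ (s + 0) = γ s
      rw [add_zero, hagree]
    · show δ (s + dist (γ s) c) = c
      rw [hdmc, show s + (dist a c - s) = dist a c by ring, hδ.2.1]
    · rw [hdmc]
      intro u hu v hv
      have hu' : s + u ∈ Set.Icc (0:ℝ) (dist a c) := ⟨by linarith [hu.1], by linarith [hu.2]⟩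
      have hv' : s + v ∈ Set.Icc (0:ℝ) (dist a c) := ⟨by linarith [hv.1], by linarith [hv.2]⟩
      show dist (δ (s + u)) (δ (s + v)) = |u - v|
      rw [geo_dist hδ hu' hv', show s + u - (s + v) = u - v by ring]
  have hcross : ∀ r ∈ Set.Icc (0:ℝ) (dist b (γ s)), ∀ r' ∈ Set.Icc (0:ℝ) (dist (γ s) c),
      (fun r => γ (dist a b - r)) r = (fun r => δ (s + r)) r' → r = dist b (γ s) ∧ r' = 0 := by
    intro r hr r' hr' heq
    rw [hdbm] at hr
    rw [hdmc] at hr'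
    have heq' : γ (dist a b - r) = δ (s + r') := heq
    have h1 : dist a b - r ≤ s := hdown (dist a b - r)
      ⟨by linarith [hr.2], by linarith [hr.1]⟩
      (s + r') ⟨by linarith [hr'.1], by linarith [hr'.2]⟩ heq'
    have hreq : r = dist a b - s := by linarith [hr.2]
    have hsr : γ s = δ (s + r') := by
      rw [← heq', hreq, show dist a b - (dist a b - s) = s by ring]
    have hr'0 : r' = 0 := by
      have hd := geo_dist hδ hsIac
        (⟨by linarith [hr'.1], by linarith [hr'.2]⟩ : s + r' ∈ Set.Icc (0:ℝ) (dist a c))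
      rw [← hagree, ← hsr, dist_self] at hd
      have := abs_eq_zero.mp hd.symm
      linarith
    exact ⟨by rw [hdbm]; exact hreq, hr'0⟩
  obtain ⟨ε, hε⟩ := hX.1 b c
  obtain ⟨-, hbmc⟩ := concat hX hγ1 hγ2 hcross hε
  have hdam : dist a (γ s) = s := geo_dist_start hγ hsIab
  refine ⟨γ s, ?_, ?_, hbmc⟩
  · show dist a (γ s) + dist (γ s) b = dist a b
    rw [hdam, dist_comm (γ s) b, hdbm]; ring
  · show dist a (γ s) + dist (γ s) c = dist a c
    rw [hdam, hdmc]; ring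

private lemma btwn_trans_tree (hX : IsRTree X) {a b c d : X}
    (h1 : Btwn a b c) (h2 : Btwn b c d) (hbc : b ≠ c) : Btwn a c d := by
  obtain ⟨z, hz1, hz2, hz3⟩ := median hX c a d
  have hm := (btwn_merge h2 hz2).2
  obtain ⟨γ, hγ⟩ := hX.1 a c
  have hbγ : γ (dist a b) = b := btwn_eval hX h1 hγ
  have hzγ : γ (dist a z) = z := btwn_eval hX (btwn_swap hz1) hγ
  have h1' : dist a b + dist b c = dist a c := h1
  have hzc : dist a z + dist z c = dist a c := btwn_swap hz1
  have hmem1 : dist a b ∈ Set.Icc (0:ℝ) (dist a c) :=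
    ⟨dist_nonneg, by linarith [dist_nonneg (x := b) (y := c)]⟩
  have hmem2 : dist a z ∈ Set.Icc (0:ℝ) (dist a c) :=
    ⟨dist_nonneg, by linarith [dist_nonneg (x := z) (y := c)]⟩
  have hd : dist b z = |dist a b - dist a z| := by
    have := geo_dist hγ hmem1 hmem2
    rw [hbγ, hzγ] at this
    exact this
  have hdbc : 0 < dist b c := dist_pos.mpr hbc
  have hcomm : dist c z = dist z c := dist_comm c z
  have hzc0 : dist z c = 0 := by
    rcases abs_cases (dist a b - dist a z) with ⟨he, -⟩ | ⟨he, -⟩ <;> rw [he] at hd <;>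
      linarith [dist_nonneg (x := z) (y := c)]
  have : z = c := by rw [← dist_eq_zero]; exact hzc0
  rw [this] at hz3
  exact hz3

private lemma btwn_isom {a b c : X} (f : X ≃ᵢ X) (h : Btwn a b c) :
    Btwn (f a) (f b) (f c) := by
  show dist (f a) (f b) + dist (f b) (f c) = dist (f a) (f c)
  rw [f.dist_eq, f.dist_eq, f.dist_eq]
  exact h

private lemma hyperbolic_of (hX : IsRTree X) (τ : X ≃ᵢ X) {m : X} {t : ℝ}
    (ht : 0 < t) (hd : dist m (τ m) = t) (hbt : Btwn m (τ m) (τ (τ m))) :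
    IsHyperbolicIsom τ := by
  classical
  set p : ℤ → X := fun n => (τ ^ n) m with hp
  have hp_add : ∀ (i j : ℤ) (y : X), (τ ^ (i + j)) y = (τ ^ i) ((τ ^ j) y) := by
    intro i j y
    rw [zpow_add]
    rfl
  have hp0 : p 0 = m := by simp [hp]
  have hp1 : ∀ n : ℤ, p (n + 1) = (τ ^ n) (τ m) := by
    intro n
    show (τ ^ (n + 1)) m = (τ ^ n) (τ m)
    rw [hp_add n 1]
    all_goals rw [zpow_one]
  have hp2 : ∀ n : ℤ, p (n + 2) = (τ ^ n) (τ (τ m)) := by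
    intro n
    show (τ ^ (n + 2)) m = (τ ^ n) (τ (τ m))
    have h2 : (τ ^ (2:ℤ)) m = τ (τ m) := by
      rw [show (2:ℤ) = 1 + 1 from rfl, hp_add 1 1]
      all_goals rw [zpow_one]
    rw [hp_add n 2, h2]
  have hptau : ∀ n : ℤ, τ (p n) = p (n + 1) := by
    intro n
    rw [show n + 1 = 1 + n by ring]
    show τ ((τ ^ n) m) = (τ ^ (1 + n)) m
    rw [hp_add 1 n]
    rfl
  have hstep : ∀ n : ℤ, Btwn (p n) (p (n + 1)) (p (n + 2)) ∧ dist (p n) (p (n + 1)) = t := by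
    intro n
    rw [hp1, hp2]
    constructor
    · exact btwn_isom (τ ^ n) hbt
    · rw [(τ ^ n).dist_eq]
      exact hd
  have hnat : ∀ n : ℕ, Btwn m (p n) (p (n + 1)) ∧ dist m (p n) = n * t := by
    intro n
    induction n with
    | zero =>
      simp only [Nat.cast_zero]
      constructor
      · show dist m (p 0) + dist (p 0) (p (0 + 1)) = dist m (p (0 + 1))
        rw [hp0, dist_self, zero_add]
      · rw [hp0, dist_self]
        norm_num
    | succ n ih =>
      have hne : p n ≠ p (n + 1) := by
        intro hEq
        have := (hstep n).2
        rw [hEq, dist_self] at this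
        linarith
      have hb := btwn_trans_tree hX ih.1 (hstep n).1 hne
      have hdm : dist m (p ((n : ℤ) + 1)) = ((n : ℕ) + 1) * t := by
        have h1 : dist m (p n) + dist (p n) (p (n + 1)) = dist m (p (n + 1)) := ih.1
        rw [ih.2, (hstep n).2] at h1
        rw [← h1]
        ring
      have hc1 : ((n + 1 : ℕ) : ℤ) = (n : ℤ) + 1 := by push_cast; ring
      constructor
      · rw [hc1, show (n : ℤ) + 1 + 1 = (n : ℤ) + 2 from by ring]
        exact hb
      · rw [hc1, hdm]
        push_cast
        ring
  have hPQ : ∀ i j : ℤ, i ≤ j → dist (p i) (p j) = (j - i) * t := by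
    intro i j hij
    have hn : (((j - i).toNat : ℤ)) = j - i := Int.toNat_of_nonneg (by linarith)
    have : p j = (τ ^ i) (p ((j - i).toNat)) := by
      show (τ ^ j) m = (τ ^ i) ((τ ^ (((j - i).toNat : ℤ))) m)
      rw [← hp_add, hn]
      congr 1
      ring_nf
    rw [this, show p i = (τ ^ i) m from rfl, (τ ^ i).dist_eq,
      (hnat ((j - i).toNat)).2]
    rw [show (((j - i).toNat : ℕ) : ℝ) = ((j : ℝ) - i) by exact_mod_cast congrArg Int.cast hn]
  obtain ⟨σ, hσ⟩ := hX.1 m (τ m)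
  have hσ0 : σ 0 = m := hσ.1
  have hσt : σ t = τ m := by rw [← hd]; exact hσ.2.1
  have hσd : ∀ u ∈ Set.Icc (0:ℝ) t, ∀ v ∈ Set.Icc (0:ℝ) t, dist (σ u) (σ v) = |u - v| := by
    rw [← hd]; exact hσ.2.2
  set e : ℝ → X := fun s => (τ ^ ⌊s / t⌋) (σ (s - ⌊s / t⌋ * t)) with he
  have hfrac : ∀ s : ℝ, 0 ≤ s - ⌊s / t⌋ * t ∧ s - ⌊s / t⌋ * t < t := by
    intro s
    have h1 : (⌊s / t⌋ : ℝ) ≤ s / t := Int.floor_le _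
    have h2 : s / t < ⌊s / t⌋ + 1 := Int.lt_floor_add_one _
    have hst : s / t * t = s := div_mul_cancel₀ s (ne_of_gt ht)
    constructor <;> nlinarith
  have hmemfrac : ∀ s : ℝ, s - ⌊s / t⌋ * t ∈ Set.Icc (0:ℝ) t :=
    fun s => ⟨(hfrac s).1, (hfrac s).2.le⟩
  have hd_left : ∀ s : ℝ, dist (p ⌊s / t⌋) (e s) = s - ⌊s / t⌋ * t := by
    intro s
    show dist ((τ ^ ⌊s / t⌋) m) ((τ ^ ⌊s / t⌋) (σ (s - ⌊s / t⌋ * t))) = _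
    rw [(τ ^ ⌊s / t⌋).dist_eq, ← hσ0,
      hσd 0 ⟨le_rfl, ht.le⟩ _ (hmemfrac s), abs_sub_comm, sub_zero,
      abs_of_nonneg (hfrac s).1]
  have hd_right : ∀ s : ℝ, dist (e s) (p (⌊s / t⌋ + 1)) = (⌊s / t⌋ + 1) * t - s := by
    intro s
    rw [hp1]
    show dist ((τ ^ ⌊s / t⌋) (σ (s - ⌊s / t⌋ * t))) ((τ ^ ⌊s / t⌋) (τ m)) = _
    rw [(τ ^ ⌊s / t⌋).dist_eq, ← hσt, hσd _ (hmemfrac s) t ⟨ht.le, le_rfl⟩,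
      abs_of_nonpos (by linarith [(hfrac s).2])]
    ring
  have hiso : ∀ s s' : ℝ, dist (e s) (e s') = |s - s'| := by
    have key : ∀ s s' : ℝ, s ≤ s' → dist (e s) (e s') = |s - s'| := by
      intro s s' hss
      have hfl : ⌊s / t⌋ ≤ ⌊s' / t⌋ := by
        apply Int.floor_le_floor
        apply div_le_div_of_nonneg_right hss ht.le
      set n := ⌊s / t⌋ with hn
      set n' := ⌊s' / t⌋ with hn'
      have hdl : dist (p n) (e s) = s - (n:ℝ) * t := hd_left s
      have hdr : dist (e s) (p (n + 1)) = ((n:ℝ) + 1) * t - s := hd_right s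
      have hdl' : dist (p n') (e s') = s' - (n':ℝ) * t := hd_left s'
      have hdr' : dist (e s') (p (n' + 1)) = ((n':ℝ) + 1) * t - s' := hd_right s'
      have hmf : s - (n:ℝ) * t ∈ Set.Icc (0:ℝ) t := hmemfrac s
      have hmf' : s' - (n':ℝ) * t ∈ Set.Icc (0:ℝ) t := hmemfrac s'
      rcases eq_or_lt_of_le hfl with hEq | hlt
      · -- same segment
        rw [← hEq] at hmf'
        show dist ((τ ^ n) (σ (s - n * t))) ((τ ^ n') (σ (s' - n' * t))) = |s - s'|
        rw [← hEq, (τ ^ n).dist_eq, hσd _ hmf _ hmf']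
        congr 1
        ring
      · -- different segments
        have hb1 : Btwn (p n) (e s) (p (n + 1)) := by
          show dist (p n) (e s) + dist (e s) (p (n + 1)) = dist (p n) (p (n + 1))
          rw [hdl, hdr, hPQ n (n + 1) (by linarith)]
          push_cast
          ring
        have hb2 : Btwn (p n) (p (n + 1)) (p (n' + 1)) := by
          show dist (p n) (p (n + 1)) + dist (p (n + 1)) (p (n' + 1)) = dist (p n) (p (n' + 1))
          rw [hPQ n (n + 1) (by linarith), hPQ (n + 1) (n' + 1) (by linarith),
            hPQ n (n' + 1) (by linarith)]
          push_cast
          ring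
        have hb3 := (btwn_split hb1 hb2).2
        have hb4 : Btwn (e s) (p (n + 1)) (p (n' + 1)) := (btwn_split hb1 hb2).1
        have hb5 : Btwn (p (n + 1)) (p n') (p (n' + 1)) := by
          show dist (p (n + 1)) (p n') + dist (p n') (p (n' + 1)) = dist (p (n + 1)) (p (n' + 1))
          rw [hPQ (n + 1) n' (by linarith), hPQ n' (n' + 1) (by linarith),
            hPQ (n + 1) (n' + 1) (by linarith)]
          push_cast
          ring
        obtain ⟨hb6, hd6⟩ := btwn_merge hb4 hb5
        -- hb6 : Btwn (e s) (p n') (p (n' + 1)), hd6 : dist (e s) (p n') = ...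
        have hb7 : Btwn (p n') (e s') (p (n' + 1)) := by
          show dist (p n') (e s') + dist (e s') (p (n' + 1)) = dist (p n') (p (n' + 1))
          rw [hdl', hdr', hPQ n' (n' + 1) (by linarith)]
          push_cast
          ring
        obtain ⟨-, hd8⟩ := btwn_merge hb6 hb7
        rw [hd8, hd6, hdr, hPQ (n + 1) n' (by linarith), hdl',
          abs_of_nonpos (by linarith : s - s' ≤ 0)]
        push_cast
        ring
    intro s s'
    rcases le_total s s' with h | h
    · exact key s s' h
    · rw [dist_comm, abs_sub_comm]
      exact key s' s h
  have hshift : ∀ s : ℝ, τ (e s) = e (s + t) := by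
    intro s
    have hfl : ⌊(s + t) / t⌋ = ⌊s / t⌋ + 1 := by
      rw [show (s + t) / t = s / t + 1 by field_simp]
      exact Int.floor_add_one _
    show τ ((τ ^ ⌊s / t⌋) (σ (s - ⌊s / t⌋ * t))) = (τ ^ ⌊(s + t) / t⌋) (σ (s + t - ⌊(s + t) / t⌋ * t))
    rw [hfl]
    have harg : s + t - (⌊s / t⌋ + 1 : ℤ) * t = s - ⌊s / t⌋ * t := by
      push_cast
      ring
    rw [harg]
    have : (τ ^ (⌊s / t⌋ + 1)) = τ ^ (1 + ⌊s / t⌋) := by rw [add_comm]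
    rw [this]
    rw [hp_add 1 ⌊s / t⌋]
    norm_num
  have hmove : ∀ s : ℝ, dist (e s) (τ (e s)) = t := by
    intro s
    rw [hshift, hiso, abs_of_nonpos (by linarith)]
    ring
  -- projection onto the axis
  have hproj : ∀ y : X, ∃ s₀ : ℝ, (∀ s : ℝ, Btwn y (e s₀) (e s)) := by
    intro y
    have he_isom : Isometry e := by
      apply Isometry.of_dist_eq
      intro s s'
      rw [hiso, Real.dist_eq]
    set F : ℝ → ℝ := fun s => dist y (e s) with hF
    have hFcont : Continuous F := continuous_const.dist he_isom.continuous
    set R := F 0 with hR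
    have hR0 : 0 ≤ R := dist_nonneg
    have hK : IsCompact (Set.Icc (-(2 * R + 1)) (2 * R + 1)) := isCompact_Icc
    have h0K : (0:ℝ) ∈ Set.Icc (-(2 * R + 1)) (2 * R + 1) := ⟨by linarith, by linarith⟩
    obtain ⟨s₀, hs₀K, hmin⟩ := hK.exists_isMinOn ⟨0, h0K⟩ hFcont.continuousOn
    have hglobal : ∀ s : ℝ, F s₀ ≤ F s := by
      intro s
      by_cases hs : s ∈ Set.Icc (-(2 * R + 1)) (2 * R + 1)
      · exact hmin hs
      · have habs : 2 * R + 1 < |s| := by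
          rcases not_and_or.mp (by rwa [Set.mem_Icc] at hs) with h | h
          · push_neg at h
            rw [abs_of_neg (by linarith)]
            linarith
          · push_neg at h
            rw [abs_of_pos (by linarith)]
            exact h
        have h1 : dist (e s) (e 0) ≤ F s + R := by
          calc dist (e s) (e 0) ≤ dist (e s) y + dist y (e 0) := dist_triangle _ _ _
            _ = F s + R := by rw [dist_comm (e s) y]
        rw [hiso, sub_zero] at h1
        have h2 : F s₀ ≤ R := hmin h0K
        linarith
    refine ⟨s₀, ?_⟩
    intro s
    obtain ⟨w, hw1, hw2, hw3⟩ := median hX y (e s₀) (e s)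
    have hwaxis : ∃ sw : ℝ, e sw = w := by
      rcases le_total s₀ s with hss | hss
      · have hη : IsGeodesicSegment (fun r => e (s₀ + r)) (e s₀) (e s) := by
          refine ⟨by show e (s₀ + 0) = e s₀; rw [add_zero], ?_, ?_⟩
          · rw [hiso, abs_of_nonpos (by linarith)]
            show e (s₀ + -(s₀ - s)) = e s
            congr 1
            ring
          · intro u _ v _
            show dist (e (s₀ + u)) (e (s₀ + v)) = |u - v|
            rw [hiso]
            congr 1
            ring
        exact ⟨s₀ + dist (e s₀) w, btwn_eval hX hw3 hη⟩
      · have hη : IsGeodesicSegment (fun r => e (s₀ - r)) (e s₀) (e s) := by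
          refine ⟨by show e (s₀ - 0) = e s₀; rw [sub_zero], ?_, ?_⟩
          · rw [hiso, abs_of_nonneg (by linarith)]
            show e (s₀ - (s₀ - s)) = e s
            congr 1
            ring
          · intro u _ v _
            show dist (e (s₀ - u)) (e (s₀ - v)) = |u - v|
            rw [hiso, show s₀ - u - (s₀ - v) = -(u - v) by ring, abs_neg]
        exact ⟨s₀ - dist (e s₀) w, btwn_eval hX hw3 hη⟩
    obtain ⟨sw, hsw⟩ := hwaxis
    have hwq : w = e s₀ := by
      have h1 : dist y (e s₀) ≤ dist y w := by rw [← hsw]; exact hglobal sw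
      have h2 : dist y w + dist w (e s₀) = dist y (e s₀) := hw1
      have : dist w (e s₀) ≤ 0 := by linarith
      have : dist w (e s₀) = 0 := le_antisymm this dist_nonneg
      exact dist_eq_zero.mp this
    rw [hwq] at hw2
    exact hw2
  have hlower : ∀ y : X, t ≤ dist y (τ y) := by
    intro y
    obtain ⟨s₀, hb⟩ := hproj y
    have h1 : dist y (e (s₀ + t)) = dist y (e s₀) + t := by
      have := hb (s₀ + t)
      have hqd : dist (e s₀) (e (s₀ + t)) = t := by
        rw [hiso, abs_of_nonpos (by linarith)]; ring
      rw [← this, hqd]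
    have h2 : dist (τ y) (e (s₀ + t)) = dist y (e s₀) := by
      rw [← hshift, τ.dist_eq]
    have htri : dist y (e (s₀ + t)) ≤ dist y (τ y) + dist (τ y) (e (s₀ + t)) :=
      dist_triangle _ _ _
    rw [h1, h2] at htri
    linarith
  haveI : Nonempty X := ⟨m⟩
  have hbdd : BddBelow (Set.range fun x : X => dist x (τ x)) := by
    refine ⟨0, ?_⟩
    rintro r ⟨x, rfl⟩
    exact dist_nonneg
  have hTL : translationLength τ = t := by
    apply le_antisymm
    · have := ciInf_le hbdd m
      rwa [hd] at this
    · exact le_ciInf hlower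
  refine ⟨hTL ▸ ht, e, hiso, ?_⟩
  apply Set.eq_of_subset_of_subset
  · rintro z ⟨s, rfl⟩
    show dist (e s) (τ (e s)) = translationLength τ
    rw [hmove, hTL]
  · intro y hy
    have hy' : dist y (τ y) = t := by
      have : dist y (τ y) = translationLength τ := hy
      rw [this, hTL]
    obtain ⟨s₀, hb⟩ := hproj y
    set q := e s₀ with hq
    set r := dist y q with hr
    have hqd : dist q (e (s₀ + t)) = t := by
      rw [hiso, abs_of_nonpos (by linarith)]; ring
    have hytq : dist y (e (s₀ + t)) = r + t := by
      have := hb (s₀ + t)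
      rw [← this, hqd]
    have hbtau : ∀ s : ℝ, Btwn (τ y) (e (s₀ + t)) (e (s + t)) := by
      intro s
      have := btwn_isom τ (hb s)
      rwa [hshift, hshift] at this
    have hq' : Btwn (τ y) (e (s₀ + t)) q := by
      have := hbtau (s₀ - t)
      rwa [show s₀ - t + t = s₀ by ring] at this
    have htyq : dist (τ y) q = r + t := by
      have h1 : dist (τ y) (e (s₀ + t)) + dist (e (s₀ + t)) q = dist (τ y) q := hq'
      have h2 : dist (τ y) (e (s₀ + t)) = r := by rw [← hshift, τ.dist_eq]
      have h3 : dist (e (s₀ + t)) q = t := by rw [dist_comm]; exact hqd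
      rw [h2, h3] at h1
      exact h1.symm
    obtain ⟨v, hv1, hv2, hv3⟩ := median hX q y (τ y)
    have hdv1 : dist q v + dist v y = r := by
      have : dist q v + dist v y = dist q y := hv1
      rw [dist_comm q y] at this
      exact this
    have hdv2 : dist q v + dist v (τ y) = r + t := by
      have : dist q v + dist v (τ y) = dist q (τ y) := hv2
      rw [dist_comm q (τ y), htyq] at this
      exact this
    have hdv3 : dist y v + dist v (τ y) = t := by
      have : dist y v + dist v (τ y) = dist y (τ y) := hv3
      rw [hy'] at this
      exact this
    have hvy : dist v y = 0 := by
      have := dist_comm y v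
      linarith
    have hvy' : v = y := by rw [← dist_eq_zero]; exact hvy
    have hqyty : Btwn q y (τ y) := hvy' ▸ hv2
    have hqy : dist q y = r := dist_comm q y
    -- both y and τ q = e (s₀ + t) lie on a geodesic from q to τ y
    obtain ⟨ζ, hζ⟩ := hX.1 q (τ y)
    have hy_on : ζ r = y := by
      have := btwn_eval hX hqyty hζ
      rwa [hqy] at this
    have htq_on : ζ t = e (s₀ + t) := by
      have hqb : Btwn q (e (s₀ + t)) (τ y) := btwn_swap hq'
      have := btwn_eval hX hqb hζ
      rwa [hqd] at this
    have hrange : r ∈ Set.Icc (0:ℝ) (dist q (τ y)) := by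
      have : dist q (τ y) = r + t := by rw [dist_comm]; exact htyq
      rw [this]
      exact ⟨dist_nonneg, by linarith⟩
    have htrange : t ∈ Set.Icc (0:ℝ) (dist q (τ y)) := by
      have : dist q (τ y) = r + t := by rw [dist_comm]; exact htyq
      rw [this]
      constructor
      · linarith
      · have : (0:ℝ) ≤ r := dist_nonneg
        linarith
    rcases le_or_gt r t with hrt | hrt
    · -- y between q and τ q on the axis
      have hbqyt : Btwn q y (e (s₀ + t)) := by
        show dist q y + dist y (e (s₀ + t)) = dist q (e (s₀ + t))
        have hdyy : dist y (e (s₀ + t)) = t - r := by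
          rw [← hy_on, ← htq_on, geo_dist hζ hrange htrange, abs_of_nonpos (by linarith)]
          ring
        rw [hqy, hdyy, hqd]
        ring
      have hη : IsGeodesicSegment (fun u => e (s₀ + u)) q (e (s₀ + t)) := by
        refine ⟨by show e (s₀ + 0) = q; rw [add_zero], ?_, ?_⟩
        · show e (s₀ + dist q (e (s₀ + t))) = e (s₀ + t)
          rw [hqd]
        · intro u _ v _
          show dist (e (s₀ + u)) (e (s₀ + v)) = |u - v|
          rw [hiso]
          congr 1
          ring
      have := btwn_eval hX hbqyt hη
      rw [hqy] at this
      exact ⟨s₀ + r, this⟩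
    · -- impossible: t < r
      exfalso
      have hdyy : dist (e (s₀ + t)) y = r - t := by
        rw [← hy_on, ← htq_on, geo_dist hζ htrange hrange, abs_of_nonpos (by linarith)]
        ring
      have : dist y (e (s₀ + t)) = r - t := by rw [dist_comm]; exact hdyy
      rw [hytq] at this
      linarith

end TreeLemmas

/-- Every isometry of an `ℝ`-tree is either elliptic or hyperbolic. -/
theorem elliptic_or_hyperbolic {X : Type*} [MetricSpace X] [Nonempty X]
    (hX : IsRTree X) (τ : X ≃ᵢ X) :
    IsElliptic τ ∨ IsHyperbolicIsom τ := by
  classical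
  obtain ⟨x⟩ := ‹Nonempty X›
  obtain ⟨m, hm1, hm2, hm3⟩ := median hX (τ x) x (τ (τ x))
  -- hm1 : Btwn (τ x) m x, hm2 : Btwn (τ x) m (τ (τ x)), hm3 : Btwn x m (τ (τ x))
  have hD2 : dist (τ x) (τ (τ x)) = dist x (τ x) := τ.dist_eq x (τ x)
  have hm1' : dist (τ x) m + dist m x = dist x (τ x) := by
    have : dist (τ x) m + dist m x = dist (τ x) x := hm1
    rwa [dist_comm (τ x) x] at this
  have hm2' : dist (τ x) m + dist m (τ (τ x)) = dist x (τ x) := by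
    have : dist (τ x) m + dist m (τ (τ x)) = dist (τ x) (τ (τ x)) := hm2
    rwa [hD2] at this
  have hk0 : 0 ≤ dist (τ x) m := dist_nonneg
  have hkD : dist (τ x) m ≤ dist x (τ x) := by
    have := dist_nonneg (x := m) (y := x)
    linarith
  by_cases hcase : dist x (τ x) ≤ 2 * dist (τ x) m
  · -- elliptic case
    left
    obtain ⟨γ, hγ⟩ := hX.1 x (τ x)
    have hxm : Btwn x m (τ x) := btwn_swap hm1
    have hDm : dist x m = dist x (τ x) - dist (τ x) m := by
      have := hm1'
      rw [dist_comm m x] at this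
      linarith
    have hmγ : γ (dist x (τ x) - dist (τ x) m) = m := by
      have := btwn_eval hX hxm hγ
      rwa [hDm] at this
    have hD0 : 0 ≤ dist x (τ x) := dist_nonneg
    have hmemw : dist x (τ x) / 2 ∈ Set.Icc (0:ℝ) (dist x (τ x)) :=
      ⟨by positivity, by linarith⟩
    have hmemm : dist x (τ x) - dist (τ x) m ∈ Set.Icc (0:ℝ) (dist x (τ x)) :=
      ⟨by linarith, by linarith⟩
    have hw1 : dist x (γ (dist x (τ x) / 2)) = dist x (τ x) / 2 := geo_dist_start hγ hmemw
    have hw2 : dist (γ (dist x (τ x) / 2)) (τ x) = dist x (τ x) / 2 := by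
      have := geo_dist_end hγ hmemw
      rw [this]; ring
    have hwm : dist (γ (dist x (τ x) / 2)) m = dist (τ x) m - dist x (τ x) / 2 := by
      have h := geo_dist hγ hmemw hmemm
      rw [hmγ, abs_of_nonneg (by linarith)] at h
      rw [h]; ring
    have hBxw : Btwn x (γ (dist x (τ x) / 2)) (τ x) := by
      show dist x (γ (dist x (τ x) / 2)) + dist (γ (dist x (τ x) / 2)) (τ x) = dist x (τ x)
      rw [hw1, hw2]; ring
    have hBgwm : Btwn (τ x) (γ (dist x (τ x) / 2)) m := by
      show dist (τ x) (γ (dist x (τ x) / 2)) + dist (γ (dist x (τ x) / 2)) m = dist (τ x) m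
      rw [dist_comm (τ x) (γ (dist x (τ x) / 2)), hw2, hwm]; ring
    have hBg : Btwn (τ x) (γ (dist x (τ x) / 2)) (τ (τ x)) := (btwn_split hBgwm hm2).2
    have hgw : Btwn (τ x) (τ (γ (dist x (τ x) / 2))) (τ (τ x)) := btwn_isom τ hBxw
    obtain ⟨ε, hε⟩ := hX.1 (τ x) (τ (τ x))
    have he1 : ε (dist (τ x) (γ (dist x (τ x) / 2))) = γ (dist x (τ x) / 2) :=
      btwn_eval hX hBg hε
    have he2 : ε (dist (τ x) (τ (γ (dist x (τ x) / 2)))) = τ (γ (dist x (τ x) / 2)) :=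
      btwn_eval hX hgw hε
    have hdw : dist (τ x) (γ (dist x (τ x) / 2)) = dist x (τ x) / 2 := by
      rw [dist_comm]; exact hw2
    have hdtw : dist (τ x) (τ (γ (dist x (τ x) / 2))) = dist x (τ x) / 2 := by
      rw [τ.dist_eq, hw1]
    refine ⟨γ (dist x (τ x) / 2), ?_⟩
    rw [← he2, hdtw, ← he1, hdw]
  · -- hyperbolic case
    right
    push_neg at hcase
    have hB1' : Btwn (τ (τ x)) (τ m) (τ x) := btwn_isom τ hm1
    have hB2' : Btwn (τ (τ x)) (τ m) (τ (τ (τ x))) := btwn_isom τ hm2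
    have hB3' : Btwn (τ x) (τ m) (τ (τ (τ x))) := btwn_isom τ hm3
    have hB1'' : Btwn (τ (τ (τ x))) (τ (τ m)) (τ (τ x)) := btwn_isom τ hB1'
    have hdtm : dist (τ (τ x)) (τ m) = dist (τ x) m := by rw [τ.dist_eq]
    have hdtm2 : dist (τ m) (τ x) = dist x (τ x) - dist (τ x) m := by
      rw [τ.dist_eq]
      have := hm1'
      rw [dist_comm m x] at this
      linarith
    have hd23 : dist (τ (τ x)) (τ (τ (τ x))) = dist x (τ x) := by
      rw [τ.dist_eq, hD2]
    have hdm2 : dist m (τ (τ x)) = dist x (τ x) - dist (τ x) m := by linarith [hm2']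
    obtain ⟨δ, hδ⟩ := hX.1 (τ x) (τ (τ x))
    have hmemk : dist (τ x) m ∈ Set.Icc (0:ℝ) (dist (τ x) (τ (τ x))) := by
      rw [hD2]; exact ⟨hk0, hkD⟩
    have hmemDk : dist x (τ x) - dist (τ x) m ∈ Set.Icc (0:ℝ) (dist (τ x) (τ (τ x))) := by
      rw [hD2]; exact ⟨by linarith, by linarith⟩
    have hmδ : δ (dist (τ x) m) = m := btwn_eval hX hm2 hδ
    have htmδ : δ (dist x (τ x) - dist (τ x) m) = τ m := by
      have hsw : Btwn (τ x) (τ m) (τ (τ x)) := btwn_swap hB1'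
      have := btwn_eval hX hsw hδ
      rwa [dist_comm (τ x) (τ m), hdtm2] at this
    have hdmtm : dist m (τ m) = dist x (τ x) - 2 * dist (τ x) m := by
      have h := geo_dist hδ hmemk hmemDk
      rw [hmδ, htmδ, abs_of_nonpos (by linarith)] at h
      rw [h]; ring
    have ht : 0 < dist x (τ x) - 2 * dist (τ x) m := by linarith
    have hgxmtm : Btwn (τ x) m (τ m) := by
      show dist (τ x) m + dist m (τ m) = dist (τ x) (τ m)
      rw [hdmtm, dist_comm (τ x) (τ m), hdtm2]
      ring
    obtain ⟨ρ, hρ⟩ := hX.1 (τ (τ x)) (τ (τ (τ x)))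
    have hd2tm' : dist (τ (τ x)) (τ (τ m)) = dist x (τ x) - dist (τ x) m := by
      rw [τ.dist_eq, τ.dist_eq]
      have := hm1'
      rw [dist_comm m x, dist_comm (τ x) m] at this
      rw [dist_comm]
      linarith
    have htmρ : ρ (dist (τ x) m) = τ m := by
      have := btwn_eval hX hB2' hρ
      rwa [hdtm] at this
    have h2tmρ : ρ (dist x (τ x) - dist (τ x) m) = τ (τ m) := by
      have hsw : Btwn (τ (τ x)) (τ (τ m)) (τ (τ (τ x))) := btwn_swap hB1''
      have := btwn_eval hX hsw hρ
      rwa [hd2tm'] at this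
    have hdtm2m : dist (τ m) (τ (τ m)) = dist x (τ x) - 2 * dist (τ x) m := by
      rw [τ.dist_eq]; exact hdmtm
    have hB_t2 : Btwn (τ (τ x)) (τ m) (τ (τ m)) := by
      show dist (τ (τ x)) (τ m) + dist (τ m) (τ (τ m)) = dist (τ (τ x)) (τ (τ m))
      rw [hdtm, hdtm2m, hd2tm']
      ring
    have hB_t3 : Btwn (τ (τ x)) (τ (τ m)) (τ (τ (τ x))) := btwn_swap hB1''
    have hdmt2x : dist (τ m) (τ (τ (τ x))) = dist x (τ x) - dist (τ x) m := by
      rw [τ.dist_eq]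
      exact hdm2
    obtain ⟨n, hn1, hn2, hn3⟩ := median hX (τ m) m (τ (τ m))
    obtain ⟨hs7, hd7⟩ := btwn_merge hgxmtm (btwn_swap hn1)
    obtain ⟨hs8a, -⟩ := btwn_split hs7 hB3'
    have hd8 : dist n (τ (τ (τ x))) = dist n (τ m) + (dist x (τ x) - dist (τ x) m) := by
      have : dist n (τ m) + dist (τ m) (τ (τ (τ x))) = dist n (τ (τ (τ x))) := hs8a
      rw [hdmt2x] at this
      linarith
    obtain ⟨hs9, hd9⟩ := btwn_merge hB_t2 hn2
    obtain ⟨-, hs10⟩ := btwn_split hs9 hB_t3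
    have hd10 : dist n (τ (τ (τ x))) =
        dist x (τ x) - dist (τ x) m - dist (τ m) n := by
      have h' : dist (τ (τ x)) n + dist n (τ (τ (τ x))) = dist (τ (τ x)) (τ (τ (τ x))) := hs10
      rw [hd23, hd9, hdtm] at h'
      linarith
    have hdn : dist (τ m) n = 0 := by
      rw [dist_comm n (τ m)] at hd8
      linarith
    have hntm : n = τ m := by
      rw [← dist_eq_zero, dist_comm]
      exact hdn
    rw [hntm] at hn3
    exact hyperbolic_of hX τ ht hdmtm hn3
end

section
/- Suppose α and β are isometries of an ℝ-tree Γ whose cores C(α) and C(β) are nonempty and disjoint. Then t(αβ) = t(α) + t(β) + 2·d(C(α), C(β)), where d(C(α), C(β)) is the distance between the two cores. -/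
open Set Filter Metric

/-- The distance between two subsets of a metric space. -/
noncomputable def setDist {X : Type*} [MetricSpace X] (A B : Set X) : ℝ :=
  sInf {r : ℝ | ∃ a ∈ A, ∃ b ∈ B, r = dist a b}

namespace RTreeAux

variable {X : Type*} [MetricSpace X]

/-- `b` lies between `a` and `c`. -/
def Btw (a b c : X) : Prop := dist a b + dist b c = dist a c

lemma Btw.symm {a b c : X} (h : Btw a b c) : Btw c b a := by
  unfold Btw at *
  rw [dist_comm c b, dist_comm b a, dist_comm c a]
  linarith

lemma btw_self_left (a c : X) : Btw a a c := by simp [Btw]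

lemma btw_self_right (a c : X) : Btw a c c := by simp [Btw]

/-- From `a–x–m` and `a–m–b` conclude `x–m–b`. -/
lemma Btw.chain₁ {a x m b : X} (h1 : Btw a x m) (h2 : Btw a m b) : Btw x m b := by
  unfold Btw at *
  have t2 : dist x b ≤ dist x m + dist m b := dist_triangle _ _ _
  have t3 : dist a b ≤ dist a x + dist x b := dist_triangle _ _ _
  linarith

/-- From `a–x–m` and `a–m–b` conclude `a–x–b`. -/
lemma Btw.chain₂ {a x m b : X} (h1 : Btw a x m) (h2 : Btw a m b) : Btw a x b := by
  unfold Btw at *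
  have t2 : dist x b ≤ dist x m + dist m b := dist_triangle _ _ _
  have t3 : dist a b ≤ dist a x + dist x b := dist_triangle _ _ _
  linarith

/-- From `a–b–d` and `b–c–d` conclude `a–c–d`. -/
lemma Btw.chain₃ {a b c d : X} (h1 : Btw a b d) (h2 : Btw b c d) : Btw a c d := by
  unfold Btw at *
  have t1 : dist a c ≤ dist a b + dist b c := dist_triangle _ _ _
  have t2 : dist a d ≤ dist a c + dist c d := dist_triangle _ _ _
  linarith

/-- From `u–m–c` and `m–v–c` conclude `u–m–v`. -/
lemma Btw.mid {u m v c : X} (h1 : Btw u m c) (h2 : Btw m v c) : Btw u m v := by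
  unfold Btw at *
  have t1 : dist u v ≤ dist u m + dist m v := dist_triangle _ _ _
  have t2 : dist u c ≤ dist u v + dist v c := dist_triangle _ _ _
  linarith

lemma Btw.map {a b c : X} (h : Btw a b c) {f : X → X} (hf : Isometry f) :
    Btw (f a) (f b) (f c) := by
  unfold Btw at *
  rw [hf.dist_eq, hf.dist_eq, hf.dist_eq]
  exact h

section Geodesic

variable {γ : ℝ → X} {a b : X}

lemma geo_dist_left (hγ : IsGeodesicSegment γ a b)
    {s : ℝ} (hs : s ∈ Set.Icc 0 (dist a b)) : dist a (γ s) = s := by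
  have h0 : (0:ℝ) ∈ Set.Icc 0 (dist a b) := ⟨le_refl _, dist_nonneg⟩
  have h := hγ.2.2 0 h0 s hs
  rw [hγ.1] at h
  rw [h, abs_of_nonpos (by linarith [hs.1])]
  ring

lemma geo_dist_right (hγ : IsGeodesicSegment γ a b)
    {s : ℝ} (hs : s ∈ Set.Icc 0 (dist a b)) : dist (γ s) b = dist a b - s := by
  have hD : dist a b ∈ Set.Icc 0 (dist a b) := ⟨dist_nonneg, le_refl _⟩
  have h := hγ.2.2 s hs (dist a b) hD
  rw [hγ.2.1] at h
  rw [h, abs_of_nonpos (by linarith [hs.2])]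
  ring

lemma geo_btw (hγ : IsGeodesicSegment γ a b)
    {s : ℝ} (hs : s ∈ Set.Icc 0 (dist a b)) : Btw a (γ s) b := by
  unfold Btw
  rw [geo_dist_left hγ hs, geo_dist_right hγ hs]
  ring

lemma geo_continuousOn (hγ : IsGeodesicSegment γ a b) :
    ContinuousOn γ (Set.Icc 0 (dist a b)) := by
  refine (LipschitzOnWith.of_dist_le_mul (K := 1) fun s hs t ht => ?_).continuousOn
  rw [hγ.2.2 s hs t ht, Real.dist_eq]
  simp

/-- Affine reparametrization of a nondegenerate geodesic is an arc. -/
lemma geo_arcParam (hγ : IsGeodesicSegment γ a b) (hD : 0 < dist a b) :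
    IsArcParam (fun t => γ (t * dist a b)) a b := by
  have hmap : ∀ t ∈ Set.Icc (0:ℝ) 1, t * dist a b ∈ Set.Icc 0 (dist a b) := by
    intro t ht
    constructor
    · exact mul_nonneg ht.1 dist_nonneg
    · nlinarith [ht.2, hD]
  refine ⟨?_, ?_, by simp [hγ.1], by simp [hγ.2.1]⟩
  · exact (geo_continuousOn hγ).comp (continuous_mul_right _).continuousOn hmap
  · intro t ht t' ht' h
    have h' : γ (t * dist a b) = γ (t' * dist a b) := h
    have h2 := hγ.2.2 _ (hmap t ht) _ (hmap t' ht')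
    rw [h'] at h2
    simp only [dist_self] at h2
    have h3 : t * dist a b = t' * dist a b := by
      have := h2.symm
      rwa [abs_eq_zero, sub_eq_zero] at this
    exact mul_right_cancel₀ (ne_of_gt hD) h3

/-- A point on a geodesic at a prescribed distance from `a`. -/
lemma exists_btw_dist (hX : IsRTree X) (a b : X) {s : ℝ} (hs : s ∈ Set.Icc 0 (dist a b)) :
    ∃ w : X, Btw a w b ∧ dist a w = s := by
  obtain ⟨γ, hγ⟩ := hX.1 a b
  exact ⟨γ s, geo_btw hγ hs, geo_dist_left hγ hs⟩

end Geodesic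

end RTreeAux

namespace RTreeAux

variable {X : Type*} [MetricSpace X]

lemma Btw.dist13 {a b c : X} (h : Btw a b c) : dist a c = dist a b + dist b c :=
  Eq.symm h

/-- Concatenation of geodesics `a → u → b` when `u` is between `a` and `b`. -/
lemma concat_geodesic {a u b : X} (h : Btw a u b) {γ₁ γ₂ : ℝ → X}
    (h₁ : IsGeodesicSegment γ₁ a u) (h₂ : IsGeodesicSegment γ₂ u b) :
    IsGeodesicSegment (fun s => if s ≤ dist a u then γ₁ s else γ₂ (s - dist a u)) a b := by
  have hD : dist a b = dist a u + dist u b := h.dist13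
  have hd1 : (0:ℝ) ≤ dist a u := dist_nonneg
  have hd2 : (0:ℝ) ≤ dist u b := dist_nonneg
  refine ⟨by simp [hd1, h₁.1], ?_, ?_⟩
  · by_cases hc : dist a b ≤ dist a u
    · have h2z : dist u b = 0 := by linarith
      have hub : u = b := by rwa [dist_eq_zero] at h2z
      simp only [hc, if_true]
      have : dist a b = dist a u := by linarith
      rw [this, h₁.2.1, hub]
    · simp only [hc, if_false]
      have : dist a b - dist a u = dist u b := by linarith
      rw [this, h₂.2.1]
  · -- isometry property; first prove it for s ≤ t
    have key : ∀ s ∈ Set.Icc (0:ℝ) (dist a b), ∀ t ∈ Set.Icc (0:ℝ) (dist a b), s ≤ t →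
        dist ((fun s => if s ≤ dist a u then γ₁ s else γ₂ (s - dist a u)) s)
             ((fun s => if s ≤ dist a u then γ₁ s else γ₂ (s - dist a u)) t) = t - s := by
      intro s hs t ht hst
      by_cases hs1 : s ≤ dist a u
      · by_cases ht1 : t ≤ dist a u
        · simp only [hs1, ht1, if_true]
          rw [h₁.2.2 s ⟨hs.1, hs1⟩ t ⟨ht.1, ht1⟩, abs_of_nonpos (by linarith)]
          ring
        · push_neg at ht1
          simp only [hs1, if_true, not_le.mpr ht1, if_false]
          have htmem : t - dist a u ∈ Set.Icc (0:ℝ) (dist u b) :=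
            ⟨by linarith, by linarith [ht.2]⟩
          have hsmem : s ∈ Set.Icc (0:ℝ) (dist a u) := ⟨hs.1, hs1⟩
          apply le_antisymm
          · calc dist (γ₁ s) (γ₂ (t - dist a u))
                ≤ dist (γ₁ s) u + dist u (γ₂ (t - dist a u)) := dist_triangle _ _ _
              _ = (dist a u - s) + (t - dist a u) := by
                  rw [geo_dist_right h₁ hsmem, geo_dist_left h₂ htmem]
              _ = t - s := by ring
          · have t1 : dist a b ≤ dist a (γ₁ s) + dist (γ₁ s) (γ₂ (t - dist a u))
                + dist (γ₂ (t - dist a u)) b := dist_triangle4 _ _ _ _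
            rw [geo_dist_left h₁ hsmem, geo_dist_right h₂ htmem] at t1
            linarith
      · push_neg at hs1
        have ht1 : ¬ t ≤ dist a u := by push_neg; linarith
        simp only [not_le.mpr hs1, ht1, if_false]
        have hsmem : s - dist a u ∈ Set.Icc (0:ℝ) (dist u b) :=
          ⟨by linarith, by linarith [hs.2]⟩
        have htmem : t - dist a u ∈ Set.Icc (0:ℝ) (dist u b) :=
          ⟨by linarith, by linarith [ht.2]⟩
        rw [h₂.2.2 _ hsmem _ htmem, abs_of_nonpos (by linarith)]
        ring
    intro s hs t ht
    rcases le_total s t with hst | hst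
    · rw [key s hs t ht hst, abs_of_nonpos (by linarith)]; ring
    · rw [dist_comm, key t ht s hs hst, abs_of_nonneg (by linarith)]

/-- In an ℝ-tree, a point between `a` and `b` lies on (any) geodesic from `a` to `b`,
at parameter `dist a u`. -/
lemma btw_param (hX : IsRTree X) {γ : ℝ → X} {a b u : X}
    (hγ : IsGeodesicSegment γ a b) (h : Btw a u b) : u = γ (dist a u) := by
  have h' : dist a u + dist u b = dist a b := h
  rcases eq_or_lt_of_le (dist_nonneg : (0:ℝ) ≤ dist a b) with hD | hD
  · -- degenerate: a = b
    have hu : dist a u = 0 := by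
      have h1 := dist_nonneg (x := a) (y := u)
      have h2 := dist_nonneg (x := u) (y := b)
      linarith
    rw [hu, hγ.1]
    rw [← dist_eq_zero, dist_comm]; exact hu
  · -- nondegenerate
    obtain ⟨γ₁, hγ₁⟩ := hX.1 a u
    obtain ⟨γ₂, hγ₂⟩ := hX.1 u b
    set γ' := fun s => if s ≤ dist a u then γ₁ s else γ₂ (s - dist a u) with hγ'def
    have hγ' : IsGeodesicSegment γ' a b := concat_geodesic h hγ₁ hγ₂
    have harc := geo_arcParam hγ hD
    have harc' := geo_arcParam hγ' hD
    have himg := hX.2 a b _ _ harc harc'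
    have humem : u ∈ (fun t => γ' (t * dist a b)) '' Set.Icc 0 1 := by
      refine ⟨dist a u / dist a b, ⟨div_nonneg dist_nonneg dist_nonneg, ?_⟩, ?_⟩
      · rw [div_le_one hD]
        linarith [dist_nonneg (x := u) (y := b)]
      · show γ' (dist a u / dist a b * dist a b) = u
        rw [div_mul_cancel₀ _ (ne_of_gt hD)]
        show (if dist a u ≤ dist a u then γ₁ (dist a u) else _) = u
        rw [if_pos (le_refl _)]
        exact hγ₁.2.1
    rw [← himg] at humem
    obtain ⟨t, ht, hut⟩ := humem
    have htmem : t * dist a b ∈ Set.Icc 0 (dist a b) := by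
      constructor
      · exact mul_nonneg ht.1 dist_nonneg
      · nlinarith [ht.2]
    have hut' : γ (t * dist a b) = u := hut
    have hdau : dist a u = t * dist a b := by
      have hh : dist a (γ (t * dist a b)) = t * dist a b := geo_dist_left hγ htmem
      rw [hut'] at hh
      exact hh
    rw [hdau]
    exact hut'.symm

end RTreeAux

namespace RTreeAux

variable {X : Type*} [MetricSpace X]

lemma btw_dist (hX : IsRTree X) {a b u v : X} (hu : Btw a u b) (hv : Btw a v b) :
    dist u v = |dist a u - dist a v| := by
  obtain ⟨γ, hγ⟩ := hX.1 a b
  have hu' : dist a u + dist u b = dist a b := hu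
  have hv' : dist a v + dist v b = dist a b := hv
  have humem : dist a u ∈ Set.Icc 0 (dist a b) :=
    ⟨dist_nonneg, by linarith [dist_nonneg (x := u) (y := b)]⟩
  have hvmem : dist a v ∈ Set.Icc 0 (dist a b) :=
    ⟨dist_nonneg, by linarith [dist_nonneg (x := v) (y := b)]⟩
  have hu2 := btw_param hX hγ hu
  have hv2 := btw_param hX hγ hv
  have key := hγ.2.2 _ humem _ hvmem
  rw [← hu2, ← hv2] at key
  exact key

lemma btw_order (hX : IsRTree X) {a b u v : X} (hu : Btw a u b) (hv : Btw a v b)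
    (h : dist a u ≤ dist a v) : Btw a u v := by
  have hd := btw_dist hX hu hv
  rw [abs_of_nonpos (by linarith)] at hd
  show dist a u + dist u v = dist a v
  rw [hd]; ring

lemma btw_uniq (hX : IsRTree X) {a b u v : X} (hu : Btw a u b) (hv : Btw a v b)
    (h : dist a u = dist a v) : u = v := by
  have hd := btw_dist hX hu hv
  rw [h, sub_self, abs_zero, dist_eq_zero] at hd
  exact hd

/-- Median (Y-point) of three points in an ℝ-tree. -/
theorem exists_median (hX : IsRTree X) (a b c : X) :
    ∃ m : X, Btw a m b ∧ Btw a m c ∧ Btw b m c := by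
  obtain ⟨γ, hγ⟩ := hX.1 a b
  obtain ⟨δ, hδ⟩ := hX.1 a c
  set D₁ := dist a b with hD₁
  set D₂ := dist a c with hD₂
  have hD₁0 : 0 ≤ D₁ := dist_nonneg
  have hD₂0 : 0 ≤ D₂ := dist_nonneg
  set K := min D₁ D₂ with hK
  have hK0 : 0 ≤ K := le_min hD₁0 hD₂0
  set S : Set ℝ := {s | s ∈ Set.Icc 0 K ∧ γ s = δ s} with hS
  -- clamped compositions are continuous
  have hsub1 : ∀ s : ℝ, max 0 (min s K) ∈ Set.Icc 0 D₁ := fun s =>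
    ⟨le_max_left _ _, max_le (by linarith [min_le_left D₁ D₂])
      (le_trans (min_le_right _ _) (min_le_left D₁ D₂))⟩
  have hsub2 : ∀ s : ℝ, max 0 (min s K) ∈ Set.Icc 0 D₂ := fun s =>
    ⟨le_max_left _ _, max_le (by linarith [min_le_right D₁ D₂])
      (le_trans (min_le_right _ _) (min_le_right D₁ D₂))⟩
  have hclcont : Continuous fun s : ℝ => max 0 (min s K) :=
    continuous_const.max (continuous_id.min continuous_const)
  have hg1 : Continuous fun s : ℝ => γ (max 0 (min s K)) :=
    (geo_continuousOn hγ).comp_continuous hclcont hsub1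
  have hg2 : Continuous fun s : ℝ => δ (max 0 (min s K)) :=
    (geo_continuousOn hδ).comp_continuous hclcont hsub2
  have hcl_id : ∀ s ∈ Set.Icc (0:ℝ) K, max 0 (min s K) = s := by
    intro s hs
    rw [min_eq_left hs.2, max_eq_right hs.1]
  have hSclosed : IsClosed S := by
    have hSeq : S = Set.Icc 0 K ∩ (fun s => dist (γ (max 0 (min s K))) (δ (max 0 (min s K)))) ⁻¹' {0} := by
      ext s
      constructor
      · rintro ⟨hs1, hs2⟩
        refine ⟨hs1, ?_⟩
        simp only [Set.mem_preimage, Set.mem_singleton_iff, hcl_id s hs1, hs2, dist_self]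
      · rintro ⟨hs1, hs2⟩
        simp only [Set.mem_preimage, Set.mem_singleton_iff, hcl_id s hs1, dist_eq_zero] at hs2
        exact ⟨hs1, hs2⟩
    rw [hSeq]
    exact isClosed_Icc.inter (IsClosed.preimage (hg1.dist hg2) isClosed_singleton)
  have h0S : (0:ℝ) ∈ S := ⟨⟨le_refl _, hK0⟩, by rw [hγ.1, hδ.1]⟩
  have hbddS : BddAbove S := ⟨K, fun s hs => hs.1.2⟩
  set μ := sSup S with hμdef
  have hμS : μ ∈ S := hSclosed.csSup_mem ⟨0, h0S⟩ hbddS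
  have hμIcc : μ ∈ Set.Icc 0 K := hμS.1
  have hγδ : γ μ = δ μ := hμS.2
  have hμ1 : μ ∈ Set.Icc 0 D₁ := ⟨hμIcc.1, le_trans hμIcc.2 (min_le_left _ _)⟩
  have hμ2 : μ ∈ Set.Icc 0 D₂ := ⟨hμIcc.1, le_trans hμIcc.2 (min_le_right _ _)⟩
  refine ⟨γ μ, geo_btw hγ hμ1, ?_, ?_⟩
  · rw [hγδ]; exact geo_btw hδ hμ2
  -- main part: Btw b (γ μ) c
  rcases eq_or_lt_of_le hμ1.2 with hμD₁ | hμD₁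
  · -- μ = D₁ : the median is b
    rw [hμD₁, hγ.2.1]
    exact btw_self_left b c
  rcases eq_or_lt_of_le hμ2.2 with hμD₂ | hμD₂
  · rw [hγδ, hμD₂, hδ.2.1]
    exact btw_self_right b c
  -- nondegenerate case: build the concatenated arc from b to c through γ μ
  have hl1 : 0 < D₁ - μ := by linarith
  have hl2 : 0 < D₂ - μ := by linarith
  set A1 : ℝ → ℝ := fun t => D₁ - 2*t*(D₁ - μ) with hA1
  set A2 : ℝ → ℝ := fun t => μ + (2*t - 1)*(D₂ - μ) with hA2
  set φ : ℝ → X := fun t =>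
    if t ≤ (1/2 : ℝ) then γ (max 0 (min (A1 t) D₁)) else δ (max 0 (min (A2 t) D₂)) with hφdef
  have hA1mem : ∀ t : ℝ, 0 ≤ t → t ≤ 1/2 → A1 t ∈ Set.Icc μ D₁ := by
    intro t h0 h12
    constructor
    · simp only [hA1]; nlinarith
    · simp only [hA1]; nlinarith
  have hA2mem : ∀ t : ℝ, 1/2 ≤ t → t ≤ 1 → A2 t ∈ Set.Icc μ D₂ := by
    intro t h12 h1
    constructor
    · simp only [hA2]; nlinarith
    · simp only [hA2]; nlinarith
  have hclampγ : ∀ s : ℝ, s ∈ Set.Icc μ D₁ → max 0 (min s D₁) = s := by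
    intro s hs
    rw [min_eq_left hs.2, max_eq_right (le_trans hμ1.1 hs.1)]
  have hclampδ : ∀ s : ℝ, s ∈ Set.Icc μ D₂ → max 0 (min s D₂) = s := by
    intro s hs
    rw [min_eq_left hs.2, max_eq_right (le_trans hμ2.1 hs.1)]
  have hval1 : ∀ t : ℝ, 0 ≤ t → t ≤ 1/2 → φ t = γ (A1 t) := by
    intro t h0 h12
    simp only [hφdef, if_pos h12, hclampγ _ (hA1mem t h0 h12)]
  have hval2 : ∀ t : ℝ, 1/2 < t → t ≤ 1 → φ t = δ (A2 t) := by
    intro t h12 h1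
    simp only [hφdef, if_neg (not_le.mpr h12), hclampδ _ (hA2mem t (le_of_lt h12) h1)]
  -- continuity
  have hb1cont : Continuous fun t : ℝ => γ (max 0 (min (A1 t) D₁)) := by
    refine (geo_continuousOn hγ).comp_continuous ?_ ?_
    · exact (continuous_const.max ((by fun_prop : Continuous A1).min continuous_const))
    · intro t
      exact ⟨le_max_left _ _, max_le hD₁0 (min_le_right _ _)⟩
  have hb2cont : Continuous fun t : ℝ => δ (max 0 (min (A2 t) D₂)) := by
    refine (geo_continuousOn hδ).comp_continuous ?_ ?_
    · exact (continuous_const.max ((by fun_prop : Continuous A2).min continuous_const))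
    · intro t
      exact ⟨le_max_left _ _, max_le hD₂0 (min_le_right _ _)⟩
  have hφcont : Continuous φ := by
    rw [hφdef]
    refine Continuous.if_le hb1cont hb2cont continuous_id continuous_const ?_
    intro t ht
    have h1 : A1 t = μ := by simp only [hA1, ht]; ring
    have h2 : A2 t = μ := by simp only [hA2, ht]; ring
    rw [h1, h2, hclampγ _ ⟨le_refl _, le_of_lt hμD₁⟩, hclampδ _ ⟨le_refl _, le_of_lt hμD₂⟩, hγδ]
  -- injectivity (monotone form)
  have hauxdist : ∀ t : ℝ, 0 ≤ t → t ≤ 1/2 → dist a (φ t) = A1 t := by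
    intro t h0 h12
    rw [hval1 t h0 h12]
    exact geo_dist_left hγ ⟨le_trans hμ1.1 (hA1mem t h0 h12).1, (hA1mem t h0 h12).2⟩
  have hauxdist2 : ∀ t : ℝ, 1/2 < t → t ≤ 1 → dist a (φ t) = A2 t := by
    intro t h12 h1
    rw [hval2 t h12 h1]
    exact geo_dist_left hδ ⟨le_trans hμ2.1 (hA2mem t (le_of_lt h12) h1).1,
      (hA2mem t (le_of_lt h12) h1).2⟩
  have hinj : Set.InjOn φ (Set.Icc 0 1) := by
    have aux : ∀ t ∈ Set.Icc (0:ℝ) 1, ∀ t' ∈ Set.Icc (0:ℝ) 1, t ≤ t' → φ t = φ t' → t = t' := by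
      intro t ht t' ht' htt' heq
      rcases le_or_gt t' (1/2) with h2 | h2
      · -- both in first branch
        have e1 := hval1 t ht.1 (le_trans htt' h2)
        have e2 := hval1 t' ht'.1 h2
        rw [e1, e2] at heq
        have d1 := hγ.2.2 (A1 t) ⟨le_trans hμ1.1 (hA1mem t ht.1 (le_trans htt' h2)).1,
          (hA1mem t ht.1 (le_trans htt' h2)).2⟩ (A1 t')
          ⟨le_trans hμ1.1 (hA1mem t' ht'.1 h2).1, (hA1mem t' ht'.1 h2).2⟩
        rw [heq, dist_self] at d1
        have : A1 t = A1 t' := by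
          have := d1.symm
          rwa [abs_eq_zero, sub_eq_zero] at this
        simp only [hA1] at this
        nlinarith
      · rcases le_or_gt t (1/2) with h1 | h1
        · -- mixed case: impossible
          exfalso
          have e1 := hval1 t ht.1 h1
          have e2 := hval2 t' h2 ht'.2
          have hd1 := hauxdist t ht.1 h1
          have hd2 := hauxdist2 t' h2 ht'.2
          rw [heq] at hd1
          have hss : A2 t' = A1 t := by rw [← hd1, ← hd2]
          -- A1 t belongs to S
          have hs1 : A1 t ∈ Set.Icc μ D₁ := hA1mem t ht.1 h1
          have hs2 : A2 t' ∈ Set.Icc μ D₂ := hA2mem t' (le_of_lt h2) ht'.2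
          have hmemS : A1 t ∈ S := by
            refine ⟨⟨le_trans hμ1.1 hs1.1, le_min hs1.2 ?_⟩, ?_⟩
            · rw [← hss]; exact hs2.2
            · rw [e1, e2] at heq
              rw [heq, hss]
          have hle : A1 t ≤ μ := le_csSup hbddS hmemS
          have hgt : μ < A2 t' := by
            simp only [hA2]
            nlinarith
          linarith [hss]
        · -- both in second branch
          have e1 := hval2 t h1 (le_trans htt' ht'.2)
          have e2 := hval2 t' h2 ht'.2
          rw [e1, e2] at heq
          have d1 := hδ.2.2 (A2 t) ⟨le_trans hμ2.1 (hA2mem t (le_of_lt h1) (le_trans htt' ht'.2)).1,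
            (hA2mem t (le_of_lt h1) (le_trans htt' ht'.2)).2⟩ (A2 t')
            ⟨le_trans hμ2.1 (hA2mem t' (le_of_lt h2) ht'.2).1, (hA2mem t' (le_of_lt h2) ht'.2).2⟩
        
          rw [heq, dist_self] at d1
          have : A2 t = A2 t' := by
            have := d1.symm
            rwa [abs_eq_zero, sub_eq_zero] at this
          simp only [hA2] at this
          nlinarith
    intro t ht t' ht' heq
    rcases le_total t t' with h | h
    · exact aux t ht t' ht' h heq
    · exact (aux t' ht' t ht h heq.symm).symm
  have hφ0 : φ 0 = b := by
    have := hval1 0 (le_refl _) (by norm_num)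
    rw [this]
    have : A1 0 = D₁ := by simp [hA1]
    rw [this, hγ.2.1]
  have hφ1 : φ 1 = c := by
    have := hval2 1 (by norm_num) (le_refl _)
    rw [this]
    have : A2 1 = D₂ := by simp [hA2]; ring
    rw [this, hδ.2.1]
  have hφhalf : φ (1/2) = γ μ := by
    have := hval1 (1/2) (by norm_num) (le_refl _)
    rw [this]
    have : A1 (1/2) = μ := by simp only [hA1]; ring
    rw [this]
  have harcφ : IsArcParam φ b c := ⟨hφcont.continuousOn, hinj, hφ0, hφ1⟩
  have hbc : b ≠ c := by
    intro hbceq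
    have h01 : (0:ℝ) ∈ Set.Icc (0:ℝ) 1 := by norm_num
    have h11 : (1:ℝ) ∈ Set.Icc (0:ℝ) 1 := by norm_num
    have := hinj h01 h11 (by rw [hφ0, hφ1, hbceq])
    norm_num at this
  obtain ⟨ε, hε⟩ := hX.1 b c
  have harcε := geo_arcParam hε (dist_pos.mpr hbc)
  have himg := hX.2 b c φ _ harcφ harcε
  have hmem : γ μ ∈ (fun t => ε (t * dist b c)) '' Set.Icc 0 1 := by
    rw [← himg]
    exact ⟨1/2, ⟨by norm_num, by norm_num⟩, hφhalf⟩
  obtain ⟨t, ht, hmt⟩ := hmem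
  have htm : t * dist b c ∈ Set.Icc 0 (dist b c) := by
    constructor
    · exact mul_nonneg ht.1 dist_nonneg
    · nlinarith [ht.2, dist_nonneg (x := b) (y := c)]
  have : ε (t * dist b c) = γ μ := hmt
  rw [← this]
  exact geo_btw hε htm

end RTreeAux

namespace RTreeAux

variable {X : Type*} [MetricSpace X]

/-- No backtracking: `a–b–c`, `b–c–d`, `b ≠ c` imply `a–b–d`. -/
lemma no_backtrack (hX : IsRTree X) {a b c d : X}
    (h1 : Btw a b c) (h2 : Btw b c d) (hbc : b ≠ c) : Btw a b d := by
  obtain ⟨m, hm1, hm2, hm3⟩ := exists_median hX a d b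
  -- hm1 : Btw a m d, hm2 : Btw a m b, hm3 : Btw d m b
  rcases le_or_gt (dist b m) (dist b c) with hle | hlt
  · -- m = b
    have hbmd : Btw b m d := hm3.symm
    have hbcd : Btw b c d := h2
    have hbmc : Btw b m c := btw_order hX hbmd hbcd hle
    -- m on [a,b] and on [b,c]; with Btw a b c this forces m = b
    have habm : Btw a m b := hm2
    have h1' : Btw a b c := h1
    have e1 : dist a m + dist m b = dist a b := habm
    have e2 : dist b m + dist m c = dist b c := hbmc
    have e3 : dist a b + dist b c = dist a c := h1'
    have t1 : dist a c ≤ dist a m + dist m c := dist_triangle _ _ _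
    have hmb : dist m b = 0 := by
      have hd := dist_comm b m
      linarith [dist_nonneg (x := m) (y := b)]
    have : m = b := by rwa [dist_eq_zero] at hmb
    rw [this] at hm1
    exact hm1
  · -- c strictly between b and m : contradiction
    exfalso
    have hbmd : Btw b m d := hm3.symm
    have hbcm : Btw b c m := btw_order hX h2 hbmd (le_of_lt hlt)
    have hbma : Btw b m a := hm2.symm
    -- Btw b c m and Btw b m a give Btw b c a
    have hbca : Btw b c a := hbcm.chain₂ hbma
    have e1 : dist b c + dist c a = dist b a := hbca
    have e2 : dist a b + dist b c = dist a c := h1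
    have hz : dist b c = 0 := by
      rw [dist_comm b a] at e1
      rw [dist_comm c a] at e1
      linarith
    exact hbc (by rwa [dist_eq_zero] at hz)

section Isom

variable (τ : X ≃ᵢ X)

lemma tl_le (x : X) : translationLength τ ≤ dist x (τ x) := by
  have : Nonempty X := ⟨x⟩
  exact ciInf_le ⟨0, by rintro _ ⟨y, rfl⟩; exact dist_nonneg⟩ x

lemma tl_nonneg [Nonempty X] : 0 ≤ translationLength τ :=
  le_ciInf fun x => dist_nonneg

lemma core_apply {x : X} (hx : x ∈ isomCore τ) : τ x ∈ isomCore τ := by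
  show dist (τ x) (τ (τ x)) = _
  rw [τ.dist_eq]
  exact hx

lemma core_symm_apply {x : X} (hx : x ∈ isomCore τ) : τ.symm x ∈ isomCore τ := by
  show dist (τ.symm x) (τ (τ.symm x)) = _
  rw [τ.apply_symm_apply]
  calc dist (τ.symm x) x = dist (τ (τ.symm x)) (τ x) := (τ.dist_eq _ _).symm
    _ = dist x (τ x) := by rw [τ.apply_symm_apply]
    _ = _ := hx

/-- Hyperbolicity criterion: if the segment from `x` to `τ x` does not backtrack at
`τ x`, then `x` realizes the translation length. -/
theorem crit (hX : IsRTree X) (x : X) (h : Btw x (τ x) (τ (τ x))) :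
    translationLength τ = dist x (τ x) := by
  have : Nonempty X := ⟨x⟩
  set f : X → X := ⇑τ with hf
  have hfiso : Isometry f := τ.isometry
  set D := dist x (τ x) with hD
  refine le_antisymm (tl_le τ x) (le_ciInf fun z => ?_)
  rcases eq_or_lt_of_le (dist_nonneg : (0:ℝ) ≤ D) with hD0 | hD0
  · have : D ≤ 0 := le_of_eq hD0.symm
    exact le_trans this dist_nonneg
  -- iterates
  have hiter : ∀ n : ℕ, ∀ u v : X, dist (f^[n] u) (f^[n] v) = dist u v := by
    intro n
    induction n with
    | zero => simp
    | succ k ih =>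
      intro u v
      rw [Function.iterate_succ_apply, Function.iterate_succ_apply, ih, hfiso.dist_eq]
  have hbtwn : ∀ n : ℕ, Btw (f^[n] x) (f^[n+1] x) (f^[n+2] x) := by
    intro n
    have : Btw (f^[n] x) (f^[n] (f x)) (f^[n] (f (f x))) := by
      unfold Btw
      rw [hiter n, hiter n, hiter n]
      exact h
    rwa [← Function.iterate_succ_apply, ← Function.iterate_succ_apply,
      ← Function.iterate_succ_apply] at this
  have hne : ∀ n : ℕ, f^[n] x ≠ f^[n+1] x := by
    intro n heq
    have : dist (f^[n] x) (f^[n+1] x) = D := by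
      rw [Function.iterate_succ_apply, hiter n]
    rw [heq, dist_self] at this
    linarith
  have hmain : ∀ n : ℕ, Btw x (f^[n] x) (f^[n+1] x) ∧ dist x (f^[n] x) = n * D := by
    intro n
    induction n with
    | zero => exact ⟨btw_self_left _ _, by simp⟩
    | succ k ih =>
      constructor
      · exact (no_backtrack hX ih.1 (hbtwn k) (hne k)).chain₃ (hbtwn k)
      · have e : dist x (f^[k] x) + dist (f^[k] x) (f^[k+1] x) = dist x (f^[k+1] x) := ih.1
        have e2 : dist (f^[k] x) (f^[k+1] x) = D := by
          rw [Function.iterate_succ_apply, hiter k]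
        rw [e2, ih.2] at e
        push_cast
        linarith
  have hupper : ∀ n : ℕ, dist x (f^[n] x) ≤ 2 * dist x z + n * dist z (τ z) := by
    intro n
    have h1 : dist z (f^[n] z) ≤ n * dist z (f z) := by
      induction n with
      | zero => simp
      | succ k ih =>
        have : dist z (f^[k+1] z) ≤ dist z (f^[k] z) + dist (f^[k] z) (f^[k+1] z) :=
          dist_triangle _ _ _
        have e2 : dist (f^[k] z) (f^[k+1] z) = dist z (f z) := by
          rw [Function.iterate_succ_apply, hiter k]
        push_cast
        push_cast at ih
        linarith
    have h2 : dist x (f^[n] x) ≤ dist x z + dist z (f^[n] z) + dist (f^[n] z) (f^[n] x) :=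
      dist_triangle4 _ _ _ _
    rw [hiter n z x, dist_comm z x] at h2
    have : f z = τ z := rfl
    rw [this] at h1
    linarith
  -- conclude D ≤ dist z (τ z)
  by_contra hcon
  push_neg at hcon
  obtain ⟨n, hn⟩ := exists_nat_gt ((2 * dist x z) / (D - dist z (τ z)))
  have hpos : 0 < D - dist z (τ z) := by linarith
  have h1 : (2 * dist x z) < n * (D - dist z (τ z)) := by
    rw [div_lt_iff₀ hpos] at hn
    linarith
  have h2 := hupper n
  rw [(hmain n).2] at h2
  nlinarith

end Isom

end RTreeAux

namespace RTreeAux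

variable {X : Type*} [MetricSpace X]

/-- The displacement function is quasiconvex along segments. -/
lemma displacement_quasiconvex (hX : IsRTree X) (τ : X ≃ᵢ X) {x y x' : X}
    (h : Btw x y x') :
    dist y (τ y) ≤ max (dist x (τ x)) (dist x' (τ x')) := by
  obtain ⟨m, hm1, hm2, hm3⟩ := exists_median hX x x' (τ y)
  -- hm1 : Btw x m x', hm2 : Btw x m (τ y), hm3 : Btw x' m (τ y)
  rcases le_or_gt (dist x m) (dist x y) with hle | hlt
  · -- m on the x-side of y; go through x'
    have hxmy : Btw x m y := btw_order hX hm1 h hle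
    have hmyx' : Btw m y x' := hxmy.chain₁ h
    have e1 : dist x' m + dist m (τ y) = dist x' (τ y) := hm3
    have e2 : dist x' y + dist y m = dist x' m := hmyx'.symm
    have t1 : dist y (τ y) ≤ dist y m + dist m (τ y) := dist_triangle _ _ _
    have t2 : dist x' (τ y) ≤ dist x' (τ x') + dist (τ x') (τ y) := dist_triangle _ _ _
    rw [τ.dist_eq x' y] at t2
    have : dist y (τ y) ≤ dist x' (τ x') := by linarith
    exact le_trans this (le_max_right _ _)
  · -- m on the x'-side of y; go through x
    have hxym : Btw x y m := btw_order hX h hm1 (le_of_lt hlt)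
    have e1 : dist x m + dist m (τ y) = dist x (τ y) := hm2
    have e2 : dist x y + dist y m = dist x m := hxym
    have t1 : dist y (τ y) ≤ dist y m + dist m (τ y) := dist_triangle _ _ _
    have t2 : dist x (τ y) ≤ dist x (τ x) + dist (τ x) (τ y) := dist_triangle _ _ _
    rw [τ.dist_eq x y] at t2
    have : dist y (τ y) ≤ dist x (τ x) := by linarith
    exact le_trans this (le_max_left _ _)

/-- Cores are convex. -/
lemma core_convex (hX : IsRTree X) (τ : X ≃ᵢ X) {x y x' : X}
    (hx : x ∈ isomCore τ) (hx' : x' ∈ isomCore τ) (h : Btw x y x') : y ∈ isomCore τ := by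
  have h1 := displacement_quasiconvex hX τ h
  rw [hx, hx', max_self] at h1
  exact le_antisymm h1 (tl_le τ y)

/-- Fundamental lemma: every point admits a closest core point, and the displacement
is the translation length plus twice the distance to the core. -/
theorem exists_proj (hX : IsRTree X) (τ : X ≃ᵢ X) (x : X) :
    ∃ c, c ∈ isomCore τ ∧ dist x (τ x) = translationLength τ + 2 * dist x c ∧
      ∀ c' ∈ isomCore τ, dist x c ≤ dist x c' := by
  have hNE : Nonempty X := ⟨x⟩
  -- it suffices to find a core point with the equality
  suffices hmain : ∃ c, c ∈ isomCore τ ∧ dist x (τ x) = translationLength τ + 2 * dist x c by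
    obtain ⟨c, hc, he⟩ := hmain
    refine ⟨c, hc, he, fun c' hc' => ?_⟩
    have t : dist x (τ x) ≤ dist x c' + dist c' (τ c') + dist (τ c') (τ x) :=
      dist_triangle4 _ _ _ _
    rw [τ.dist_eq c' x, dist_comm c' x, hc'] at t
    linarith
  set y := τ x with hy
  set z := τ y with hz
  set D := dist x y with hDdef
  have hDyz : dist y z = D := τ.dist_eq x y
  obtain ⟨m, hm1, hm2, hm3⟩ := exists_median hX x y z
  set k := dist y m with hk
  have hxm : dist x m = D - k := by
    have e : dist x m + dist m y = dist x y := hm1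
    rw [dist_comm m y] at e
    linarith [e]
  have hkD : k ≤ D := by
    have e : dist y m + dist m x = dist y x := hm1.symm
    rw [dist_comm y x] at e
    linarith [dist_nonneg (x := m) (y := x)]
  have hk0 : 0 ≤ k := dist_nonneg
  rcases le_or_gt k (D/2) with hcase | hcase
  · -- generic / hyperbolic-side case
    have hτm_yz : Btw y (τ m) z := by
      have := hm1.map τ.isometry
      exact this
    have hdyτm : dist y (τ m) = D - k := by
      have h' : dist y (τ m) = dist x m := τ.dist_eq x m
      rw [h', hxm]
    have hym_yz : Btw y m z := hm3
    have h1 : Btw y m (τ m) := by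
      apply btw_order hX hym_yz hτm_yz
      rw [← hk, hdyτm]; linarith
    have hdmτm : dist m (τ m) = D - 2*k := by
      have e : dist y m + dist m (τ m) = dist y (τ m) := h1
      rw [← hk] at e
      rw [hdyτm] at e
      linarith
    -- chain to get Btw m (τ m) (τ (τ m))
    have hamc : Btw y (τ m) (τ z) := hm2.map τ.isometry
    have humc : Btw m (τ m) (τ z) := h1.chain₁ hamc
    have hbmv : Btw z (τ m) (τ (τ m)) := h1.map τ.isometry
    have hbvc : Btw z (τ (τ m)) (τ z) := by
      have := (hm1.map τ.isometry).map τ.isometry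
      exact this
    have hmvc : Btw (τ m) (τ (τ m)) (τ z) := hbmv.chain₁ hbvc
    have hfinal : Btw m (τ m) (τ (τ m)) := humc.mid hmvc
    have hcrit := crit τ hX m hfinal
    have hmcore : m ∈ isomCore τ := by
      show dist m (τ m) = _
      rw [hcrit]
    refine ⟨τ.symm m, core_symm_apply τ hmcore, ?_⟩
    have hdxc : dist x (τ.symm m) = k := by
      calc dist x (τ.symm m) = dist (τ x) (τ (τ.symm m)) := (τ.dist_eq _ _).symm
        _ = dist y m := by rw [τ.apply_symm_apply]
        _ = k := rfl
    rw [hdxc, hcrit, hdmτm]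
    ring
  · -- elliptic case: the midpoint of [x, τ x] is fixed
    obtain ⟨w, hw1, hw2⟩ := exists_btw_dist hX x y (s := D/2) ⟨by linarith, by linarith⟩
    have hwy : dist y w = D - D/2 := by
      have e : dist x w + dist w y = dist x y := hw1
      rw [dist_comm w y] at e
      linarith
    have hyw_x : Btw y w x := hw1.symm
    have hym_x : Btw y m x := hm1.symm
    have h2 : Btw y w m := btw_order hX hyw_x hym_x (by rw [hwy, ← hk]; linarith)
    have hτw_yz : Btw y (τ w) z := hw1.map τ.isometry
    have hdyτw : dist y (τ w) = D - D/2 := by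
      have h' : dist y (τ w) = dist x w := τ.dist_eq x w
      rw [h', hw2]; ring
    have h3 : Btw y (τ w) m := btw_order hX hτw_yz hm3 (by rw [hdyτw, ← hk]; linarith)
    have hww : w = τ w := btw_uniq hX h2 h3 (by rw [hwy, hdyτw])
    have ht0 : translationLength τ = 0 := by
      refine le_antisymm ?_ (tl_nonneg τ)
      have := tl_le τ w
      rw [← hww, dist_self] at this
      exact this
    refine ⟨w, ?_, ?_⟩
    · show dist w (τ w) = _
      rw [← hww, dist_self, ht0]
    · rw [ht0, hw2]
      ring

/-- Gate property: the closest point in a convex core is a gate. -/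
lemma gate (hX : IsRTree X) (τ : X ≃ᵢ X) {p q : X} (hq : q ∈ isomCore τ)
    (hmin : ∀ c' ∈ isomCore τ, dist p q ≤ dist p c') :
    ∀ cb ∈ isomCore τ, Btw p q cb := by
  intro cb hcb
  obtain ⟨n, hn1, hn2, hn3⟩ := exists_median hX p q cb
  have hnC : n ∈ isomCore τ := core_convex hX τ hq hcb hn3
  have e1 : dist p n + dist n q = dist p q := hn1
  have hge := hmin n hnC
  have hnq : dist n q = 0 := by linarith [dist_nonneg (x := n) (y := q)]
  have : n = q := by rwa [dist_eq_zero] at hnq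
  rw [← this]
  exact hn2

end RTreeAux


open RTreeAux

/-- If the cores of two isometries `α, β` of an `ℝ`-tree are nonempty
and disjoint, then `t(αβ) = t(α) + t(β) + 2 d(C(α), C(β))`. -/
theorem translationLength_mul_of_disjoint_cores {X : Type*} [MetricSpace X]
    (hX : IsRTree X) (α β : X ≃ᵢ X)
    (hα : (isomCore α).Nonempty) (hβ : (isomCore β).Nonempty)
    (hdisj : Disjoint (isomCore α) (isomCore β)) :
    translationLength (α * β)
      = translationLength α + translationLength β
        + 2 * setDist (isomCore α) (isomCore β) := by
  classical
  obtain ⟨b₀, hb₀⟩ := hβ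
  haveI hNE : Nonempty X := ⟨b₀⟩
  obtain ⟨p₀, hp₀C, -, hp₀min⟩ := exists_proj hX α b₀
  obtain ⟨q, hqC, -, hqmin⟩ := exists_proj hX β p₀
  obtain ⟨p, hpC, hpeq, hpmin⟩ := exists_proj hX α q
  -- hpeq : dist q (α q) = translationLength α + 2 * dist q p
  have htα : (0:ℝ) ≤ translationLength α := tl_nonneg α
  have htβ : (0:ℝ) ≤ translationLength β := tl_nonneg β
  have hpq_ne : p ≠ q := by
    intro h
    rw [h] at hpC
    exact Set.disjoint_left.mp hdisj hpC hqC
  have hΔpos : 0 < dist p q := dist_pos.mpr hpq_ne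
  -- gates
  have gateA : ∀ ca ∈ isomCore α, Btw q p ca := gate hX α hpC hpmin
  have gateB0 : ∀ cb ∈ isomCore β, Btw p₀ q cb := gate hX β hqC hqmin
  have gateB : ∀ cb ∈ isomCore β, Btw p q cb := by
    intro cb hcb
    have h1 : Btw q p p₀ := gateA p₀ hp₀C
    have h2 : Btw p₀ q cb := gateB0 cb hcb
    have e1 : dist q p + dist p p₀ = dist q p₀ := h1
    have e2 : dist p₀ q + dist q cb = dist p₀ cb := h2
    have t1 : dist p₀ cb ≤ dist p₀ p + dist p cb := dist_triangle _ _ _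
    have t2 : dist p cb ≤ dist p q + dist q cb := dist_triangle _ _ _
    have key : dist p q + dist q cb ≤ dist p cb := by
      linarith [dist_comm q p, dist_comm p₀ p, dist_comm p₀ q]
    exact le_antisymm key t2
  have hpqmin : ∀ cb ∈ isomCore β, dist p q ≤ dist p cb := by
    intro cb hcb
    have h := gateB cb hcb
    have e : dist p q + dist q cb = dist p cb := h
    linarith [dist_nonneg (x := q) (y := cb)]
  -- the set distance is realized by the bridge [p, q]
  have hsetdist : setDist (isomCore α) (isomCore β) = dist p q := by
    apply le_antisymm
    · exact csInf_le ⟨0, by rintro r ⟨a, ha, b, hb, rfl⟩; exact dist_nonneg⟩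
        ⟨p, hpC, q, hqC, rfl⟩
    · refine le_csInf ⟨dist p q, p, hpC, q, hqC, rfl⟩ ?_
      rintro r ⟨ca, hca, cb, hcb, rfl⟩
      have g1 : Btw q p ca := gateA ca hca
      have g2 : Btw p q cb := gateB cb hcb
      have e1 : dist q p + dist p ca = dist q ca := g1
      have e2 : dist p q + dist q cb = dist p cb := g2
      have t1 : dist p cb ≤ dist p ca + dist ca cb := dist_triangle _ _ _
      have t2 : dist q ca ≤ dist q cb + dist cb ca := dist_triangle _ _ _
      linarith [dist_comm q p, dist_comm cb ca]
  -- basic displacements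
  have htp : dist p (α p) = translationLength α := hpC
  have htq : dist q (β q) = translationLength β := hqC
  have hdpβ : dist p (β p) = translationLength β + 2 * dist p q := by
    obtain ⟨c', hc'C, he', hm'⟩ := exists_proj hX β p
    have : dist p c' = dist p q := le_antisymm (hm' q hqC) (hpqmin c' hc'C)
    rw [he', this]
  -- auxiliary points
  set pm := α.symm p with hpm
  set qp := β q with hqp
  set qm := β.symm q with hqm
  have hpmC : pm ∈ isomCore α := core_symm_apply α hpC
  have hqpC : qp ∈ isomCore β := core_apply β hqC
  have hqmC : qm ∈ isomCore β := core_symm_apply β hqC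
  have hαpm : α pm = p := α.apply_symm_apply p
  have hβqm : β qm = q := β.apply_symm_apply q
  have hdppm : dist p pm = translationLength α := by
    calc dist p pm = dist (α p) (α pm) := (α.dist_eq _ _).symm
      _ = dist (α p) p := by rw [hαpm]
      _ = dist p (α p) := dist_comm _ _
      _ = _ := htp
  have hdqqm : dist q qm = translationLength β := by
    calc dist q qm = dist (β q) (β qm) := (β.dist_eq _ _).symm
      _ = dist (β q) q := by rw [hβqm]
      _ = dist q (β q) := dist_comm _ _
      _ = _ := htq
  -- distances along the axis
  have c1 : Btw q p pm := gateA pm hpmC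
  have hdqpm : dist q pm = dist p q + translationLength α := by
    have e : dist q p + dist p pm = dist q pm := c1
    rw [dist_comm q p] at e
    linarith
  have c5 : Btw pm p q := c1.symm
  have c6 : Btw p q qp := gateB qp hqpC
  have c7 : Btw pm q qp := (no_backtrack hX c5 c6 hpq_ne).chain₃ c6
  have hdqqp : dist q qp = translationLength β := htq
  have hdpmqp : dist pm qp = dist p q + translationLength α + translationLength β := by
    have e : dist pm q + dist q qp = dist pm qp := c7
    rw [dist_comm pm q] at e
    linarith
  -- the point z = (α * β) q and the segment from q to z
  set z := α qp with hz
  have hdpαq : dist p (α q) = dist p q + translationLength α := by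
    calc dist p (α q) = dist (α pm) (α q) := by rw [hαpm]
      _ = dist pm q := α.dist_eq _ _
      _ = dist q pm := dist_comm _ _
      _ = _ := hdqpm
  have c8 : Btw q p (α q) := by
    show dist q p + dist p (α q) = dist q (α q)
    rw [hpeq, hdpαq, dist_comm q p]
    ring
  have c9 : Btw p (α q) z := by
    have h := c7.map α.isometry
    rwa [hαpm] at h
  have hdαqz : dist (α q) z = translationLength β := by
    calc dist (α q) z = dist q qp := α.dist_eq _ _
      _ = _ := htq
  have hpαq_ne : p ≠ α q := by
    intro h
    have : dist p (α q) = 0 := by rw [← h, dist_self]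
    rw [hdpαq] at this
    linarith
  have c10 : Btw q p z := no_backtrack hX c8 c9 hpαq_ne
  have hdpz : dist p z = dist p q + translationLength α + translationLength β := by
    have e : dist p (α q) + dist (α q) z = dist p z := c9
    rw [hdpαq, hdαqz] at e
    linarith
  have hdqz : dist q z = 2 * dist p q + translationLength α + translationLength β := by
    have e : dist q p + dist p z = dist q z := c10
    rw [dist_comm q p, hdpz] at e
    linarith
  -- the other side: from w' = (α β)⁻¹ p through q, p to z
  have hdpqm : dist p qm = dist p q + translationLength β := by
    have e : dist p q + dist q qm = dist p qm := gateB qm hqmC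
    linarith [hdqqm]
  have hdqβp : dist q (β p) = dist p q + translationLength β := by
    calc dist q (β p) = dist (β qm) (β p) := by rw [hβqm]
      _ = dist qm p := β.dist_eq _ _
      _ = dist p qm := dist_comm _ _
      _ = _ := hdpqm
  have c11 : Btw p q (β p) := by
    show dist p q + dist q (β p) = dist p (β p)
    rw [hdqβp, hdpβ]
    ring
  have c12 : Btw pm p (β p) := no_backtrack hX c5 c11 hpq_ne
  have hdpmβp : dist pm (β p) =
      translationLength α + translationLength β + 2 * dist p q := by
    have e : dist pm p + dist p (β p) = dist pm (β p) := c12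
    rw [dist_comm pm p, hdppm] at e
    rw [hdpβ] at e
    linarith
  set w' := β.symm pm with hw'
  have hβw' : β w' = pm := β.apply_symm_apply pm
  have hdw'q : dist w' q = dist p q + translationLength α + translationLength β := by
    calc dist w' q = dist (β w') (β q) := (β.dist_eq _ _).symm
      _ = dist pm qp := by rw [hβw']
      _ = _ := hdpmqp
  have hdw'p : dist w' p =
      translationLength α + translationLength β + 2 * dist p q := by
    calc dist w' p = dist (β w') (β p) := (β.dist_eq _ _).symm
      _ = dist pm (β p) := by rw [hβw']
      _ = _ := hdpmβp
  have c14 : Btw w' q p := by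
    show dist w' q + dist q p = dist w' p
    rw [hdw'q, hdw'p, dist_comm q p]
    ring
  have c15 : Btw w' q z := no_backtrack hX c14 c10 (Ne.symm hpq_ne)
  have c16 : Btw p z (α (β z)) := by
    have h := (c15.map β.isometry).map α.isometry
    rwa [hβw', hαpm] at h
  have hpz_ne : p ≠ z := by
    intro h
    have : dist p z = 0 := by rw [← h, dist_self]
    rw [hdpz] at this
    linarith
  have c17 : Btw q z (α (β z)) := (no_backtrack hX c10 c16 hpz_ne).chain₃ c16
  have hcrit : translationLength (α * β) = dist q ((α * β) q) := crit (α * β) hX q c17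
  rw [hcrit, hsetdist]
  have : dist q ((α * β) q) = dist q z := rfl
  rw [this, hdqz]
  ring
end
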